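/- arXiv:1104.1047 — 6 statements merged into one kernel-verified Lean document; each statement's English description precedes it below -/
import Mathlib

section
/- Let φ : [0, ∞) → ℝ be a right-continuous nonnegative function with left limits and let a > 0. Define Λ_a(φ)(t) = φ(t) - sup_{s ∈ [0,t]} [ (φ(s) - a)^+ ∧ inf_{u ∈ [s,t]} φ(u) ]. Then Λ_a(φ)(t) ∈ [0, a] for all t ≥ 0. -/
/-! Every term of the supremum in `Λ_a(φ)(t)` is at most `inf_{[s,t]} φ ≤ φ(t)` (the infima are
finite because `φ ≥ 0`), and the term at `s = t` is `(φ(t) - a)⁺ ∧ φ(t) ≥ φ(t) - a`. So the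
supremum lies in `[φ(t) - a, φ(t)]`. -/

open Set

/-- The candidate two-sided reflection map on `[0, a]`:
`Λ_a(φ)(t) = φ(t) - sup_{s ∈ [0,t]} [ (φ(s) - a)⁺ ∧ inf_{u ∈ [s,t]} φ(u) ]`. -/
noncomputable def doubleReflection (φ : ℝ → ℝ) (a : ℝ) (t : ℝ) : ℝ :=
  φ t - sSup ((fun s => min (max (φ s - a) 0) (sInf (φ '' Set.Icc s t))) '' Set.Icc 0 t)

lemma min_posPart_sInf_image_Icc_le (φ : ℝ → ℝ) {s t : ℝ} (a : ℝ) (hst : s ≤ t)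
    (hnonneg : ∀ u ∈ Icc s t, 0 ≤ φ u) :
    min (max (φ s - a) 0) (sInf (φ '' Icc s t)) ≤ φ t :=
  (min_le_right _ _).trans
    (csInf_le ⟨0, forall_mem_image.2 hnonneg⟩ (mem_image_of_mem φ ⟨hst, le_rfl⟩))

lemma sub_le_min_posPart_sInf_image_Icc_self (φ : ℝ → ℝ) {a : ℝ} (t : ℝ) (ha : 0 ≤ a) :
    φ t - a ≤ min (max (φ t - a) 0) (sInf (φ '' Icc t t)) := by
  rw [Icc_self, image_singleton, csInf_singleton]
  exact le_min (le_max_left _ _) (by linarith)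

theorem doubleReflection_mem_Icc {φ : ℝ → ℝ} {a t : ℝ} (ha : 0 ≤ a) (ht : 0 ≤ t)
    (hnonneg : ∀ u ∈ Icc 0 t, 0 ≤ φ u) : doubleReflection φ a t ∈ Icc 0 a := by
  set S := (fun s => min (max (φ s - a) 0) (sInf (φ '' Icc s t))) '' Icc 0 t with hS
  have ht_mem : t ∈ Icc 0 t := ⟨ht, le_rfl⟩
  have hle_right : ∀ x ∈ S, x ≤ φ t := forall_mem_image.2 fun s hs =>
    min_posPart_sInf_image_Icc_le φ a hs.2 fun u hu => hnonneg u ⟨hs.1.trans hu.1, hu.2⟩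
  have hterm_t : _ ∈ S := mem_image_of_mem _ ht_mem
  have hsup_le : sSup S ≤ φ t := csSup_le ⟨_, hterm_t⟩ hle_right
  have hle_sup : φ t - a ≤ sSup S :=
    (sub_le_min_posPart_sInf_image_Icc_self φ t ha).trans (le_csSup ⟨φ t, hle_right⟩ hterm_t)
  rw [doubleReflection, ← hS]
  constructor <;> linarith

theorem stmt2_general (φ : ℝ → ℝ) (a : ℝ) (ha : 0 < a)
    (hnonneg : ∀ t, 0 ≤ t → 0 ≤ φ t) :
    ∀ t, 0 ≤ t → doubleReflection φ a t ∈ Set.Icc 0 a :=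
  fun _ ht => doubleReflection_mem_Icc ha.le ht fun u hu => hnonneg u hu.1

/-- If `φ : [0,∞) → [0,∞)` is càdlàg and `a > 0`, then
`Λ_a(φ)(t) ∈ [0, a]` for all `t ≥ 0`. -/
theorem stmt2 (φ : ℝ → ℝ) (a : ℝ) (ha : 0 < a)
    (hnonneg : ∀ t, 0 ≤ t → 0 ≤ φ t)
    (hrc : ∀ t, 0 ≤ t → ContinuousWithinAt φ (Set.Ici t) t)
    (hll : ∀ t, 0 < t → ∃ l, Filter.Tendsto φ (nhdsWithin t (Set.Iio t)) (nhds l)) :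
    ∀ t, 0 ≤ t → doubleReflection φ a t ∈ Set.Icc 0 a :=
  stmt2_general φ a ha hnonneg
end

section
/- Let φ : [0, ∞) → ℝ be a nonnegative càdlàg function with φ(0) = 0 and let a > 0. Then the function Λ_a(φ) defined by Λ_a(φ)(t) = φ(t) - sup_{s ∈ [0,t]} [ (φ(s) - a)^+ ∧ inf_{u ∈ [s,t]} φ(u) ] admits a decomposition Λ_a(φ) = φ - κ_+ + κ_-, where κ_+ and κ_- are nondecreasing càdlàg functions with κ_±(0) = 0 such that κ_+ increases only at times t with Λ_a(φ)(t) = a and κ_- increases only at times t with Λ_a(φ)(t) = 0 (i.e., ∫_{[0,∞)} 1{Λ_a(φ)(s) < a} dκ_+(s) = 0 and ∫_{[0,∞)} 1{Λ_a(φ)(s) > 0} dκ_-(s) = 0). -/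
open Set MeasureTheory

/-!
Write `Λ_a(φ) = φ - η`, where `η t = sup_{s ≤ t} min ((φ s - a)⁺, inf_{[s,t]} φ)` is the regulator.
On an interval where `φ` oscillates by at most `a`, every overshoot `(φ s - a)⁺` survives the
running infimum, so `η` can only increase up to the running maximum of the overshoot; hence the
positive increments of `η` are dominated by a monotone function. Right-continuity and left limits
of `φ` cover every compact interval by finitely many such pieces, so `η` has locally bounded
variation, and `κ₊`, `κ₋` are its positive and negative variations.

Taking an infimum of suitable times and using right-continuity, if `η` increases on `[p, q]` then
`Λ_a(φ)` hits `a` in `(p, q]`, and if it decreases then `Λ_a(φ)` hits `0`. Comparing with left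
limits gives the same conclusion for jumps. So `κ₊` is constant, with no atoms, on every interval
in `{Λ_a(φ) < a}`, which is open to the right, and the Stieltjes measure of `κ₊` vanishes there;
symmetrically for `κ₋` on `{Λ_a(φ) > 0}`.
-/

open Filter Topology

theorem mem_of_forall_mem_of_sInf {f : ℝ → ℝ} {S C : Set ℝ} (hne : S.Nonempty) (hbdd : BddBelow S)
    (hf : ContinuousWithinAt f (Ici (sInf S)) (sInf S)) (hC : IsClosed C)
    (h : ∀ s ∈ S, f s ∈ C) : f (sInf S) ∈ C :=
  closure_minimal (image_subset_iff.2 h) hC <|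
    (hf.mono fun _ hs => csInf_le hbdd hs).mem_closure_image (csInf_mem_closure hne hbdd)

theorem boundedVariationOn_of_sum_posPart_le {α : Type*} [LinearOrder α] {f : α → ℝ} {s : Set α}
    {m M C : ℝ} (hm : ∀ x ∈ s, m ≤ f x) (hM : ∀ x ∈ s, f x ≤ M)
    (hC : ∀ n (u : ℕ → α), Monotone u → (∀ i, u i ∈ s) →
      ∑ i ∈ Finset.range n, (f (u (i + 1)) - f (u i))⁺ ≤ C) :
    BoundedVariationOn f s := by
  refine ne_top_of_le_ne_top (ENNReal.ofReal_ne_top (r := 2 * C + (M - m)))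
    (iSup_le fun ⟨n, u, hu, us⟩ => ?_)
  have habs : ∀ x : ℝ, |x| = 2 * x⁺ - x := fun x => by
    linarith [posPart_add_negPart x, posPart_sub_negPart x]
  calc ∑ i ∈ Finset.range n, edist (f (u (i + 1))) (f (u i))
      = ENNReal.ofReal (∑ i ∈ Finset.range n, |f (u (i + 1)) - f (u i)|) := by
        rw [ENNReal.ofReal_sum_of_nonneg fun i _ => abs_nonneg _]
        simp only [edist_dist, Real.dist_eq]
    _ ≤ ENNReal.ofReal (2 * C + (M - m)) := by
      refine ENNReal.ofReal_le_ofReal ?_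
      simp only [habs, Finset.sum_sub_distrib, ← Finset.mul_sum,
        Finset.sum_range_sub (fun i => f (u i))]
      linarith [hC n u hu us, hm _ (us n), hM _ (us 0)]

theorem BoundedVariationOn.Icc_trans {E : Type*} [PseudoEMetricSpace E] {f : ℝ → E} {x y z : ℝ}
    (hxy : x ≤ y) (hyz : y ≤ z) (h₁ : BoundedVariationOn f (Icc x y))
    (h₂ : BoundedVariationOn f (Icc y z)) : BoundedVariationOn f (Icc x z) := by
  have h := eVariationOn.Icc_add_Icc f (s := univ) hxy hyz (mem_univ y)
  simp only [univ_inter] at h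
  rw [BoundedVariationOn, ← h]
  exact ENNReal.add_ne_top.2 ⟨h₁, h₂⟩

theorem boundedVariationOn_Icc_of_forall_exists {E : Type*} [PseudoEMetricSpace E] {f : ℝ → E}
    {a b : ℝ} (hright : ∀ x ∈ Ico a b, ∃ y > x, BoundedVariationOn f (Icc x y))
    (hleft : ∀ x ∈ Ioc a b, ∃ y < x, BoundedVariationOn f (Icc y x)) :
    BoundedVariationOn f (Icc a b) := by
  rcases lt_or_ge b a with hba | hab
  · simp [BoundedVariationOn, Icc_eq_empty_of_lt hba]
  set S := {x | x ∈ Icc a b ∧ BoundedVariationOn f (Icc a x)}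
  have haS : a ∈ S := ⟨⟨le_rfl, hab⟩, by simp [BoundedVariationOn]⟩
  have hSbdd : BddAbove S := ⟨b, fun x hx => hx.1.2⟩
  set c := sSup S
  have hac : a ≤ c := le_csSup hSbdd haS
  have hcb : c ≤ b := csSup_le ⟨a, haS⟩ fun x hx => hx.1.2
  have hcS : c ∈ S := by
    refine ⟨⟨hac, hcb⟩, ?_⟩
    rcases hac.eq_or_lt with hac | hac
    · exact hac ▸ haS.2
    obtain ⟨y, hyc, hy⟩ := hleft c ⟨hac, hcb⟩
    obtain ⟨x, hxS, hx⟩ := exists_lt_of_lt_csSup ⟨a, haS⟩ (max_lt hyc hac)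
    exact hxS.2.Icc_trans hxS.1.1 (le_csSup hSbdd hxS)
      (hy.mono (Icc_subset_Icc (le_of_max_le_left hx.le) le_rfl))
  rcases hcb.eq_or_lt with hcb | hcb
  · exact hcb ▸ hcS.2
  obtain ⟨y, hcy, hy⟩ := hright c ⟨hac, hcb⟩
  have hyb : min y b ∈ S := ⟨⟨hac.trans (le_min hcy.le hcb.le), min_le_right _ _⟩,
    hcS.2.Icc_trans hac (le_min hcy.le hcb.le) (hy.mono (Icc_subset_Icc le_rfl (min_le_left _ _)))⟩
  exact absurd (le_csSup hSbdd hyb) (not_le.2 (lt_min hcy hcb))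

theorem StieltjesFunction.measure_eq_zero_of_forall_Icc (κ : StieltjesFunction ℝ) {U : Set ℝ}
    (hU : ∀ x ∈ U, ∃ y > x, Ico x y ⊆ U)
    (hIcc : ∀ x y, x ≤ y → Icc x y ⊆ U → κ.measure (Icc x y) = 0) : κ.measure U = 0 := by
  set J : ℚ → Set ℝ := fun r => {x | x ≤ r ∧ Icc x r ⊆ U}
  have hcover : U ⊆ ⋃ r, J r := fun x hx => by
    obtain ⟨y, hxy, hsub⟩ := hU x hx
    obtain ⟨r, hxr, hry⟩ := exists_rat_btwn hxy
    exact mem_iUnion.2 ⟨r, hxr.le, (Icc_subset_Ico_right hry).trans hsub⟩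
  refine measure_mono_null hcover (measure_iUnion_null fun r => ?_)
  have hJ : (J r).OrdConnected :=
    ⟨fun x hx _ hz y hy => ⟨hy.2.trans hz.1, (Icc_subset_Icc_left hy.1).trans hx.2⟩⟩
  -- inner regularity: a compact `K ⊆ J r` lies in `[min K, r] ⊆ U`
  rw [hJ.measurableSet.measure_eq_iSup_isCompact, ENNReal.iSup_eq_zero]
  intro K
  simp only [ENNReal.iSup_eq_zero]
  intro hKJ hK
  rcases K.eq_empty_or_nonempty with rfl | hne
  · exact measure_empty
  have hm := hKJ (hK.sInf_mem hne)
  have hKsub : K ⊆ Icc (sInf K) r := fun k hk => ⟨csInf_le hK.bddBelow hk, (hKJ hk).1⟩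
  exact measure_mono_null hKsub (hIcc _ _ hm.1 hm.2)

theorem exists_gt_forall_Ico_le_add {f : ℝ → ℝ} {x ε : ℝ} (hf : ContinuousWithinAt f (Ici x) x)
    (hε : 0 < ε) : ∃ w > x, ∀ y ∈ Ico x w, ∀ z ∈ Ico x w, f y ≤ f z + ε := by
  obtain ⟨w, hxw, hsub⟩ :=
    mem_nhdsGE_iff_exists_Ico_subset.1 (hf (Metric.ball_mem_nhds (f x) (half_pos hε)))
  refine ⟨w, hxw, fun y hy z hz => ?_⟩
  have hy' := abs_lt.1 (by simpa [Real.dist_eq] using hsub hy : |f y - f x| < ε / 2)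
  have hz' := abs_lt.1 (by simpa [Real.dist_eq] using hsub hz : |f z - f x| < ε / 2)
  linarith

theorem exists_lt_forall_Ioo_le_add {f : ℝ → ℝ} {x l ε : ℝ} (hf : Tendsto f (𝓝[<] x) (𝓝 l))
    (hε : 0 < ε) : ∃ v < x, ∀ y ∈ Ioo v x, ∀ z ∈ Ioo v x, f y ≤ f z + ε := by
  obtain ⟨v, hvx, hsub⟩ :=
    mem_nhdsLT_iff_exists_Ioo_subset.1 (hf (Metric.ball_mem_nhds l (half_pos hε)))
  refine ⟨v, hvx, fun y hy z hz => ?_⟩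
  have hy' := abs_lt.1 (by simpa [Real.dist_eq] using hsub hy : |f y - l| < ε / 2)
  have hz' := abs_lt.1 (by simpa [Real.dist_eq] using hsub hz : |f z - l| < ε / 2)
  linarith

section JordanDecomposition

variable {f : ℝ → ℝ} {x y : ℝ}

noncomputable def posVariation (f : ℝ → ℝ) (t : ℝ) : ℝ :=
  (variationOnFromTo f univ 0 t + (f t - f 0)) / 2

noncomputable def negVariation (f : ℝ → ℝ) (t : ℝ) : ℝ :=
  (variationOnFromTo f univ 0 t - (f t - f 0)) / 2

theorem posVariation_zero : posVariation f 0 = 0 := by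
  simp [posVariation, variationOnFromTo.self]

theorem negVariation_zero : negVariation f 0 = 0 := by
  simp [negVariation, variationOnFromTo.self]

theorem posVariation_sub_negVariation (t : ℝ) :
    posVariation f t - negVariation f t = f t - f 0 := by
  unfold posVariation negVariation
  ring

theorem monotone_posVariation (hf : LocallyBoundedVariationOn f univ) :
    Monotone (posVariation f) := fun x y hxy => by
  have h := variationOnFromTo.add_self_monotoneOn hf (mem_univ 0) (mem_univ x) (mem_univ y) hxy
  simp only [Pi.add_apply] at h
  unfold posVariation
  linarith

theorem monotone_negVariation (hf : LocallyBoundedVariationOn f univ) :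
    Monotone (negVariation f) := fun x y hxy => by
  have h := variationOnFromTo.sub_self_monotoneOn hf (mem_univ 0) (mem_univ x) (mem_univ y) hxy
  simp only [Pi.sub_apply] at h
  unfold negVariation
  linarith

theorem continuousWithinAt_variationOnFromTo (hf : LocallyBoundedVariationOn f univ)
    (hx : ContinuousWithinAt f (Ici x) x) :
    ContinuousWithinAt (variationOnFromTo f univ 0) (Ici x) x := by
  rw [← continuousWithinAt_Ioi_iff_Ici] at hx ⊢
  have h := variationOnFromTo.tendsto_right (mem_univ 0) (mem_univ x) hf
    (by simpa using hx.tendsto)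
  rwa [univ_inter, dist_self, add_zero] at h

theorem continuousWithinAt_posVariation (hf : LocallyBoundedVariationOn f univ)
    (hx : ContinuousWithinAt f (Ici x) x) : ContinuousWithinAt (posVariation f) (Ici x) x :=
  ((continuousWithinAt_variationOnFromTo hf hx).add (hx.sub continuousWithinAt_const)).div_const 2

theorem continuousWithinAt_negVariation (hf : LocallyBoundedVariationOn f univ)
    (hx : ContinuousWithinAt f (Ici x) x) : ContinuousWithinAt (negVariation f) (Ici x) x :=
  ((continuousWithinAt_variationOnFromTo hf hx).sub (hx.sub continuousWithinAt_const)).div_const 2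

theorem LocallyBoundedVariationOn.tendsto_leftLim (hf : LocallyBoundedVariationOn f univ)
    (x : ℝ) : Tendsto f (𝓝[<] x) (𝓝 (Function.leftLim f x)) := by
  have h : Tendsto f (𝓝[<] x) (𝓝 (f 0 + (Function.leftLim (posVariation f) x -
      Function.leftLim (negVariation f) x))) := by
    refine (((monotone_posVariation hf).tendsto_leftLim x).sub
      ((monotone_negVariation hf).tendsto_leftLim x)).const_add (f 0) |>.congr fun t => ?_
    rw [posVariation_sub_negVariation]
    ring
  rwa [leftLim_eq_of_tendsto h]

theorem tendsto_variationOnFromTo_nhdsLT (hf : LocallyBoundedVariationOn f univ) (x : ℝ) :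
    Tendsto (variationOnFromTo f univ 0) (𝓝[<] x)
      (𝓝 (variationOnFromTo f univ 0 x - |f x - Function.leftLim f x|)) := by
  have h := variationOnFromTo.tendsto_left (mem_univ 0) (mem_univ x) hf
    (by simpa using hf.tendsto_leftLim x)
  rwa [univ_inter, Real.dist_eq] at h

theorem posVariation_sub_leftLim (hf : LocallyBoundedVariationOn f univ) (x : ℝ) :
    posVariation f x - Function.leftLim (posVariation f) x = (f x - Function.leftLim f x)⁺ := by
  have h := ((tendsto_variationOnFromTo_nhdsLT hf x).add
    ((hf.tendsto_leftLim x).sub_const (f 0))).div_const 2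
  rw [leftLim_eq_of_tendsto (f := posVariation f) h, posVariation]
  linarith [posPart_add_negPart (f x - Function.leftLim f x),
    posPart_sub_negPart (f x - Function.leftLim f x)]

theorem negVariation_sub_leftLim (hf : LocallyBoundedVariationOn f univ) (x : ℝ) :
    negVariation f x - Function.leftLim (negVariation f) x = (f x - Function.leftLim f x)⁻ := by
  have h := ((tendsto_variationOnFromTo_nhdsLT hf x).sub
    ((hf.tendsto_leftLim x).sub_const (f 0))).div_const 2
  rw [leftLim_eq_of_tendsto (f := negVariation f) h, negVariation]
  linarith [posPart_add_negPart (f x - Function.leftLim f x),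
    posPart_sub_negPart (f x - Function.leftLim f x)]

theorem variationOnFromTo_eq_of_monotoneOn (hxy : x ≤ y) (h : MonotoneOn f (Icc x y)) :
    variationOnFromTo f univ x y = f y - f x := by
  rw [variationOnFromTo.eq_of_le f univ hxy, univ_inter, ← inter_self (Icc x y),
    h.eVariationOn_eq ⟨le_rfl, hxy⟩ ⟨hxy, le_rfl⟩,
    ENNReal.toReal_ofReal (sub_nonneg.2 (h ⟨le_rfl, hxy⟩ ⟨hxy, le_rfl⟩ hxy))]

theorem variationOnFromTo_eq_of_antitoneOn (hxy : x ≤ y) (h : AntitoneOn f (Icc x y)) :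
    variationOnFromTo f univ x y = f x - f y := by
  have hneg : variationOnFromTo f univ x y = variationOnFromTo (fun t => -f t) univ x y := by
    simp only [variationOnFromTo, eVariationOn, edist_neg_neg]
  rw [hneg, variationOnFromTo_eq_of_monotoneOn hxy h.neg]
  ring

theorem posVariation_eq_of_antitoneOn (hf : LocallyBoundedVariationOn f univ) (hxy : x ≤ y)
    (h : AntitoneOn f (Icc x y)) : posVariation f y = posVariation f x := by
  have hadd := variationOnFromTo.add hf (mem_univ 0) (mem_univ x) (mem_univ y)
  rw [variationOnFromTo_eq_of_antitoneOn hxy h] at hadd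
  unfold posVariation
  linarith

theorem negVariation_eq_of_monotoneOn (hf : LocallyBoundedVariationOn f univ) (hxy : x ≤ y)
    (h : MonotoneOn f (Icc x y)) : negVariation f y = negVariation f x := by
  have hadd := variationOnFromTo.add hf (mem_univ 0) (mem_univ x) (mem_univ y)
  rw [variationOnFromTo_eq_of_monotoneOn hxy h] at hadd
  unfold negVariation
  linarith

noncomputable def posVariationStieltjes (hf : LocallyBoundedVariationOn f univ)
    (hrc : ∀ x, ContinuousWithinAt f (Ici x) x) : StieltjesFunction ℝ :=
  ⟨posVariation f, monotone_posVariation hf, fun x => continuousWithinAt_posVariation hf (hrc x)⟩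

noncomputable def negVariationStieltjes (hf : LocallyBoundedVariationOn f univ)
    (hrc : ∀ x, ContinuousWithinAt f (Ici x) x) : StieltjesFunction ℝ :=
  ⟨negVariation f, monotone_negVariation hf, fun x => continuousWithinAt_negVariation hf (hrc x)⟩

theorem posVariationStieltjes_measure_Icc_eq_zero (hf : LocallyBoundedVariationOn f univ)
    (hrc : ∀ x, ContinuousWithinAt f (Ici x) x) (hxy : x ≤ y) (h : AntitoneOn f (Icc x y))
    (hx : f x ≤ Function.leftLim f x) : (posVariationStieltjes hf hrc).measure (Icc x y) = 0 := by
  rw [StieltjesFunction.measure_Icc, ENNReal.ofReal_eq_zero]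
  have hjump := posVariation_sub_leftLim hf x
  rw [posPart_eq_zero.2 (sub_nonpos.2 hx)] at hjump
  change posVariation f y - Function.leftLim (posVariation f) x ≤ 0
  rw [posVariation_eq_of_antitoneOn hf hxy h]
  linarith

theorem negVariationStieltjes_measure_Icc_eq_zero (hf : LocallyBoundedVariationOn f univ)
    (hrc : ∀ x, ContinuousWithinAt f (Ici x) x) (hxy : x ≤ y) (h : MonotoneOn f (Icc x y))
    (hx : Function.leftLim f x ≤ f x) : (negVariationStieltjes hf hrc).measure (Icc x y) = 0 := by
  rw [StieltjesFunction.measure_Icc, ENNReal.ofReal_eq_zero]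
  have hjump := negVariation_sub_leftLim hf x
  rw [negPart_eq_zero.2 (sub_nonneg.2 hx)] at hjump
  change negVariation f y - Function.leftLim (negVariation f) x ≤ 0
  rw [negVariation_eq_of_monotoneOn hf hxy h]
  linarith

end JordanDecomposition

namespace DoubleReflection

noncomputable def runningInf (φ : ℝ → ℝ) (s t : ℝ) : ℝ := sInf (φ '' Icc s t)

noncomputable def overshoot (φ : ℝ → ℝ) (a s : ℝ) : ℝ := (φ s - a)⁺

noncomputable def regulatorTerm (φ : ℝ → ℝ) (a s t : ℝ) : ℝ :=
  min (overshoot φ a s) (runningInf φ s t)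

noncomputable def regulator (φ : ℝ → ℝ) (a t : ℝ) : ℝ :=
  sSup ((fun s => regulatorTerm φ a s t) '' Icc 0 t)

theorem doubleReflection_eq (φ : ℝ → ℝ) (a t : ℝ) :
    doubleReflection φ a t = φ t - regulator φ a t := rfl

variable {φ : ℝ → ℝ} {a c p q s t u : ℝ}

theorem bddBelow_image_Icc (hφ : ∀ t, 0 ≤ t → 0 ≤ φ t) (hs : 0 ≤ s) : BddBelow (φ '' Icc s t) :=
  ⟨0, by rintro _ ⟨v, hv, rfl⟩; exact hφ v (hs.trans hv.1)⟩

theorem runningInf_le (hφ : ∀ t, 0 ≤ t → 0 ≤ φ t) (hs : 0 ≤ s) (hu : u ∈ Icc s t) :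
    runningInf φ s t ≤ φ u :=
  csInf_le (bddBelow_image_Icc hφ hs) (mem_image_of_mem φ hu)

theorem le_runningInf (hst : s ≤ t) (h : ∀ u ∈ Icc s t, c ≤ φ u) : c ≤ runningInf φ s t :=
  le_csInf ((nonempty_Icc.2 hst).image φ) (by rintro _ ⟨u, hu, rfl⟩; exact h u hu)

theorem runningInf_nonneg (hφ : ∀ t, 0 ≤ t → 0 ≤ φ t) (hs : 0 ≤ s) : 0 ≤ runningInf φ s t := by
  rcases le_or_gt s t with hst | hts
  · exact le_runningInf hst fun u hu => hφ u (hs.trans hu.1)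
  · simp [runningInf, Icc_eq_empty_of_lt hts]

theorem runningInf_self : runningInf φ s s = φ s := by simp [runningInf]

theorem runningInf_eq_min (hφ : ∀ t, 0 ≤ t → 0 ≤ φ t) (hp : 0 ≤ p) (hpq : p ≤ q) (hqt : q ≤ t) :
    runningInf φ p t = min (runningInf φ p q) (runningInf φ q t) := by
  rw [runningInf, ← Icc_union_Icc_eq_Icc hpq hqt, image_union]
  exact csInf_union (bddBelow_image_Icc hφ hp) ((nonempty_Icc.2 hpq).image φ)
    (bddBelow_image_Icc hφ (hp.trans hpq)) ((nonempty_Icc.2 hqt).image φ)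

theorem overshoot_nonneg : 0 ≤ overshoot φ a s := posPart_nonneg _

theorem sub_le_overshoot : φ s - a ≤ overshoot φ a s := le_posPart _

theorem overshoot_le (hφ : ∀ t, 0 ≤ t → 0 ≤ φ t) (ha : 0 ≤ a) (hs : 0 ≤ s) :
    overshoot φ a s ≤ φ s :=
  max_le (by linarith) (hφ s hs)

theorem overshoot_le_of_le (h : φ s - a ≤ c) (hc : 0 ≤ c) : overshoot φ a s ≤ c := max_le h hc

theorem overshoot_eq_of_pos (h : 0 < overshoot φ a s) : overshoot φ a s = φ s - a := by
  unfold overshoot at h ⊢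
  exact posPart_eq_self.2 (not_lt.1 fun h' => h.ne' (posPart_eq_zero.2 h'.le))

theorem regulatorTerm_nonneg (hφ : ∀ t, 0 ≤ t → 0 ≤ φ t) (hs : 0 ≤ s) :
    0 ≤ regulatorTerm φ a s t :=
  le_min overshoot_nonneg (runningInf_nonneg hφ hs)

theorem regulatorTerm_le_overshoot : regulatorTerm φ a s t ≤ overshoot φ a s := min_le_left _ _

theorem regulatorTerm_eq_min (hφ : ∀ t, 0 ≤ t → 0 ≤ φ t) (hs : 0 ≤ s) (hsq : s ≤ q) (hqt : q ≤ t) :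
    regulatorTerm φ a s t = min (regulatorTerm φ a s q) (runningInf φ q t) := by
  rw [regulatorTerm, regulatorTerm, runningInf_eq_min hφ hs hsq hqt, min_assoc]

theorem regulatorTerm_anti (hφ : ∀ t, 0 ≤ t → 0 ≤ φ t) (hs : 0 ≤ s) (hsq : s ≤ q) (hqt : q ≤ t) :
    regulatorTerm φ a s t ≤ regulatorTerm φ a s q := by
  rw [regulatorTerm_eq_min hφ hs hsq hqt]
  exact min_le_left _ _

theorem regulatorTerm_self (hφ : ∀ t, 0 ≤ t → 0 ≤ φ t) (ha : 0 ≤ a) (hs : 0 ≤ s) :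
    regulatorTerm φ a s s = overshoot φ a s := by
  rw [regulatorTerm, runningInf_self, min_eq_left (overshoot_le hφ ha hs)]

theorem regulatorTerm_le_regulator (hφ : ∀ t, 0 ≤ t → 0 ≤ φ t) (hs : 0 ≤ s) (hst : s ≤ t) :
    regulatorTerm φ a s t ≤ regulator φ a t := by
  refine le_csSup ⟨φ t, ?_⟩ ⟨s, ⟨hs, hst⟩, rfl⟩
  rintro _ ⟨v, hv, rfl⟩
  exact (min_le_right _ _).trans (runningInf_le hφ hv.1 ⟨hv.2, le_rfl⟩)

theorem regulator_le (ht : 0 ≤ t) (h : ∀ s ∈ Icc 0 t, regulatorTerm φ a s t ≤ c) :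
    regulator φ a t ≤ c :=
  csSup_le ((nonempty_Icc.2 ht).image _) (by rintro _ ⟨s, hs, rfl⟩; exact h s hs)

theorem exists_lt_regulatorTerm (ht : 0 ≤ t) (h : c < regulator φ a t) :
    ∃ s ∈ Icc 0 t, c < regulatorTerm φ a s t := by
  obtain ⟨_, ⟨s, hs, rfl⟩, hc⟩ := exists_lt_of_lt_csSup ((nonempty_Icc.2 ht).image _) h
  exact ⟨s, hs, hc⟩

theorem regulator_nonneg (hφ : ∀ t, 0 ≤ t → 0 ≤ φ t) (ht : 0 ≤ t) : 0 ≤ regulator φ a t :=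
  (regulatorTerm_nonneg hφ le_rfl).trans (regulatorTerm_le_regulator hφ le_rfl ht)

theorem regulator_le_self (hφ : ∀ t, 0 ≤ t → 0 ≤ φ t) (ht : 0 ≤ t) : regulator φ a t ≤ φ t :=
  regulator_le ht fun _ hs => (min_le_right _ _).trans (runningInf_le hφ hs.1 ⟨hs.2, le_rfl⟩)

theorem overshoot_le_regulator (hφ : ∀ t, 0 ≤ t → 0 ≤ φ t) (ha : 0 ≤ a) (ht : 0 ≤ t) :
    overshoot φ a t ≤ regulator φ a t :=
  regulatorTerm_self hφ ha ht ▸ regulatorTerm_le_regulator hφ ht le_rfl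

theorem regulator_zero (hφ : ∀ t, 0 ≤ t → 0 ≤ φ t) (h0 : φ 0 = 0) : regulator φ a 0 = 0 :=
  le_antisymm ((regulator_le_self hφ le_rfl).trans h0.le) (regulator_nonneg hφ le_rfl)

theorem regulator_le_max (hφ : ∀ t, 0 ≤ t → 0 ≤ φ t) (hq : 0 ≤ q) (hqt : q ≤ t)
    (hc : ∀ u ∈ Ioc q t, overshoot φ a u ≤ c) : regulator φ a t ≤ max (regulator φ a q) c := by
  refine regulator_le (hq.trans hqt) fun s hs => ?_
  rcases le_or_gt s q with hsq | hqs
  · exact le_max_of_le_left ((regulatorTerm_anti hφ hs.1 hsq hqt).trans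
      (regulatorTerm_le_regulator hφ hs.1 hsq))
  · exact le_max_of_le_right (regulatorTerm_le_overshoot.trans (hc s ⟨hqs, hs.2⟩))

theorem min_le_regulator (hφ : ∀ t, 0 ≤ t → 0 ≤ φ t) (hs : 0 ≤ s) (hsq : s ≤ q) (hqt : q ≤ t) :
    min (regulatorTerm φ a s q) (runningInf φ q t) ≤ regulator φ a t :=
  regulatorTerm_eq_min hφ hs hsq hqt ▸ regulatorTerm_le_regulator hφ hs (hsq.trans hqt)

theorem regulator_continuousWithinAt (hφ : ∀ t, 0 ≤ t → 0 ≤ φ t) (ha : 0 ≤ a) (ht : 0 ≤ t)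
    (hrc : ContinuousWithinAt φ (Ici t) t) : ContinuousWithinAt (regulator φ a) (Ici t) t := by
  refine tendsto_order.2 ⟨fun b hb => ?_, fun b hb => ?_⟩
  · obtain ⟨s, hs, hbs⟩ := exists_lt_regulatorTerm ht hb
    obtain ⟨b', hbb', hb's⟩ := exists_between hbs
    have hφt : b' < φ t :=
      hb's.trans_le ((min_le_right _ _).trans (runningInf_le hφ hs.1 ⟨hs.2, le_rfl⟩))
    obtain ⟨w, hw, hsub⟩ := mem_nhdsGE_iff_exists_Ico_subset.1 (hrc (Ioi_mem_nhds hφt))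
    filter_upwards [Ico_mem_nhdsGE hw] with t' ht'
    have hI : b' ≤ runningInf φ t t' :=
      le_runningInf ht'.1 fun u hu => (hsub ⟨hu.1, hu.2.trans_lt ht'.2⟩).le
    exact hbb'.trans_le ((le_min hb's.le hI).trans (min_le_regulator hφ hs.1 hs.2 ht'.1))
  · obtain ⟨c, hct, hcb⟩ := exists_between hb
    have hφt : φ t < c + a := by
      linarith [sub_le_overshoot (φ := φ) (a := a) (s := t),
        overshoot_le_regulator (a := a) hφ ha ht]
    obtain ⟨w, hw, hsub⟩ := mem_nhdsGE_iff_exists_Ico_subset.1 (hrc (Iio_mem_nhds hφt))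
    filter_upwards [Ico_mem_nhdsGE hw] with t' ht'
    refine (regulator_le_max hφ ht ht'.1 fun u hu => ?_).trans_lt (max_lt (hct.trans hcb) hcb)
    have hu : φ u < c + a := hsub ⟨hu.1.le, hu.2.trans_lt ht'.2⟩
    exact overshoot_le_of_le (by linarith) ((regulator_nonneg hφ ht).trans hct.le)

/-- By right-continuity the overshoot at `sInf S` is still at least `β`, and the running infimum
from `sInf S` is controlled by the members of `S`. -/
theorem le_regulatorTerm_sInf (hφ : ∀ t, 0 ≤ t → 0 ≤ φ t) (ha : 0 ≤ a)
    (hrc : ∀ t, 0 ≤ t → ContinuousWithinAt φ (Ici t) t) {β : ℝ} (hβ : 0 < β) {S : Set ℝ}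
    (hne : S.Nonempty) (hS : ∀ s ∈ S, 0 ≤ s ∧ s ≤ q ∧ β ≤ regulatorTerm φ a s q) :
    β ≤ regulatorTerm φ a (sInf S) q := by
  have hbdd : BddBelow S := ⟨0, fun s hs => (hS s hs).1⟩
  have hr0 : 0 ≤ sInf S := le_csInf hne fun s hs => (hS s hs).1
  have hrq : sInf S ≤ q := (csInf_le hbdd hne.some_mem).trans (hS _ hne.some_mem).2.1
  have hφr : β + a ≤ φ (sInf S) :=
    mem_of_forall_mem_of_sInf hne hbdd (hrc _ hr0) isClosed_Ici fun s hs => by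
      have hβs := (hS s hs).2.2.trans regulatorTerm_le_overshoot
      rw [overshoot_eq_of_pos (hβ.trans_le hβs)] at hβs
      exact mem_Ici.2 (by linarith)
  refine le_min (by linarith [sub_le_overshoot (φ := φ) (a := a) (s := sInf S)])
    (le_runningInf hrq fun u hu => ?_)
  rcases hu.1.eq_or_lt with hru | hru
  · rw [← hru]
    linarith
  · obtain ⟨s, hs, hsu⟩ := exists_lt_of_csInf_lt hne hru
    exact (hS s hs).2.2.trans ((min_le_right _ _).trans
      (runningInf_le hφ (hS s hs).1 ⟨hsu.le, hu.2⟩))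

theorem exists_regulator_eq_sub_of_lt (hφ : ∀ t, 0 ≤ t → 0 ≤ φ t) (ha : 0 ≤ a)
    (hrc : ∀ t, 0 ≤ t → ContinuousWithinAt φ (Ici t) t) (hp : 0 ≤ p) (hpq : p ≤ q)
    (hlt : regulator φ a p < regulator φ a q) : ∃ r ∈ Ioc p q, regulator φ a r = φ r - a := by
  obtain ⟨β, hpβ, hβq⟩ := exists_between hlt
  have hβ : 0 < β := (regulator_nonneg hφ hp).trans_lt hpβ
  have hearly : ∀ s ∈ Icc 0 p, ∀ t, p ≤ t → regulatorTerm φ a s t < β := fun s hs t hpt =>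
    ((regulatorTerm_anti hφ hs.1 hs.2 hpt).trans (regulatorTerm_le_regulator hφ hs.1 hs.2)).trans_lt
      hpβ
  set S := {s | s ∈ Ioc p q ∧ β ≤ regulatorTerm φ a s q}
  have hSne : S.Nonempty := by
    obtain ⟨s, hs, hβs⟩ := exists_lt_regulatorTerm (hp.trans hpq) hβq
    exact ⟨s, ⟨not_le.1 fun hsp => (hearly s ⟨hs.1, hsp⟩ q hpq).not_gt hβs, hs.2⟩, hβs.le⟩
  have hSbdd : BddBelow S := ⟨p, fun s hs => hs.1.1.le⟩
  set r := sInf S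
  have hpr : p ≤ r := le_csInf hSne fun s hs => hs.1.1.le
  have hr0 : 0 ≤ r := hp.trans hpr
  have hrq : r ≤ q := (csInf_le hSbdd hSne.some_mem).trans hSne.some_mem.1.2
  have hr : β ≤ regulatorTerm φ a r q :=
    le_regulatorTerm_sInf hφ ha hrc hβ hSne fun s hs => ⟨hp.trans hs.1.1.le, hs.1.2, hs.2⟩
  have hover : β ≤ overshoot φ a r := hr.trans regulatorTerm_le_overshoot
  have hle : regulator φ a r ≤ overshoot φ a r := regulator_le hr0 fun s hs => by
    rcases le_or_gt s p with hsp | hps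
    · exact (hearly s ⟨hs.1, hsp⟩ r hpr).le.trans hover
    rcases hs.2.lt_or_eq with hsr | hsr
    · have hsq : regulatorTerm φ a s q < β := not_le.1 fun h =>
        (csInf_le hSbdd ⟨⟨hps, hsr.le.trans hrq⟩, h⟩).not_gt hsr
      rw [regulatorTerm_eq_min hφ hs.1 hs.2 hrq] at hsq
      exact ((min_lt_iff.1 hsq).resolve_right (hr.trans (min_le_right _ _)).not_gt).le.trans hover
    · rw [hsr, regulatorTerm_self hφ ha hr0]
  have hpr' : p < r := hpr.lt_of_ne fun hpr => (hearly p ⟨hp, le_rfl⟩ q hpq).not_ge (hpr ▸ hr)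
  refine ⟨r, ⟨hpr', hrq⟩, ?_⟩
  rw [le_antisymm hle (overshoot_le_regulator hφ ha hr0), overshoot_eq_of_pos (hβ.trans_le hover)]

theorem exists_regulator_eq_of_lt (hφ : ∀ t, 0 ≤ t → 0 ≤ φ t)
    (hrc : ∀ t, 0 ≤ t → ContinuousWithinAt φ (Ici t) t) (hp : 0 ≤ p) (hpq : p ≤ q)
    (hlt : regulator φ a q < regulator φ a p) : ∃ r ∈ Icc p q, regulator φ a r = φ r := by
  obtain ⟨β, hqβ, hβp⟩ := exists_between hlt
  obtain ⟨s, hs, hβs⟩ := exists_lt_regulatorTerm hp hβp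
  set S := {u | u ∈ Icc p q ∧ φ u < β}
  have hSne : S.Nonempty := by
    by_contra hS
    have hI : β ≤ runningInf φ p q :=
      le_runningInf hpq fun u hu => not_lt.1 fun h => hS ⟨u, hu, h⟩
    exact (min_le_regulator hφ hs.1 hs.2 hpq).not_gt (hqβ.trans_le (le_min hβs.le hI))
  have hSbdd : BddBelow S := ⟨p, fun u hu => hu.1.1⟩
  set r := sInf S
  have hpr : p ≤ r := le_csInf hSne fun u hu => hu.1.1
  have hr0 : 0 ≤ r := hp.trans hpr
  have hrq : r ≤ q := (csInf_le hSbdd hSne.some_mem).trans hSne.some_mem.1.2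
  have hφr : φ r ≤ β :=
    mem_of_forall_mem_of_sInf hSne hSbdd (hrc r hr0) isClosed_Iic fun u hu => hu.2.le
  have hI : φ r ≤ runningInf φ p r := le_runningInf hpr fun u hu => by
    rcases hu.2.lt_or_eq with hur | hur
    · exact hφr.trans (not_lt.1 fun h => (csInf_le hSbdd ⟨⟨hu.1, hur.le.trans hrq⟩, h⟩).not_gt hur)
    · rw [hur]
  refine ⟨r, ⟨hpr, hrq⟩, le_antisymm (regulator_le_self hφ hr0) ?_⟩
  exact (le_min (hφr.trans hβs.le) hI).trans (min_le_regulator hφ hs.1 hs.2 hpr)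

theorem regulator_le_of_tendsto_nhdsLT (hφ : ∀ t, 0 ≤ t → 0 ≤ φ t) (ha : 0 ≤ a) (ht : 0 < t)
    {l L : ℝ} (hl : Tendsto φ (𝓝[<] t) (𝓝 l)) (hL : Tendsto (regulator φ a) (𝓝[<] t) (𝓝 L))
    (hΛ : doubleReflection φ a t < a) : regulator φ a t ≤ L := by
  by_contra! hLt
  have hlL : (l - a)⁺ ≤ L := by
    refine le_of_tendsto_of_tendsto ((continuous_posPart.tendsto _).comp (hl.sub_const a)) hL ?_
    filter_upwards [Ioo_mem_nhdsLT ht] with u hu using overshoot_le_regulator hφ ha hu.1.le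
  obtain ⟨c, hLc, hct⟩ := exists_between hLt
  have hlc : l - a < c := (le_posPart _).trans_lt (hlL.trans_lt hLc)
  obtain ⟨s', hs't, hsub⟩ := mem_nhdsLT_iff_exists_Ioo_subset.1 <|
    ((hL.eventually (gt_mem_nhds hLc)).and ((hl.sub_const a).eventually (gt_mem_nhds hlc))).and
      (Ioo_mem_nhdsLT ht)
  obtain ⟨s, hs's, hst⟩ := exists_between (mem_Iio.1 hs't)
  obtain ⟨⟨hηs, -⟩, hs0, -⟩ := hsub ⟨hs's, hst⟩
  have hc0 : 0 ≤ c := (posPart_nonneg _).trans (hlL.trans hLc.le)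
  have hmax := regulator_le_max hφ hs0.le hst.le (c := max c (overshoot φ a t)) fun u hu => by
    rcases hu.2.lt_or_eq with hut | hut
    · exact le_max_of_le_left (overshoot_le_of_le (hsub ⟨hs's.trans hu.1, hut⟩).1.2.le hc0)
    · exact hut ▸ le_max_right _ _
  have hη : regulator φ a t ≤ overshoot φ a t := by
    rcases le_max_iff.1 hmax with h | h
    · linarith
    · exact (le_max_iff.1 h).resolve_left (by linarith)
  have hpos : 0 < overshoot φ a t := by linarith [posPart_nonneg (l - a)]
  rw [doubleReflection_eq, le_antisymm hη (overshoot_le_regulator hφ ha ht.le),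
    overshoot_eq_of_pos hpos] at hΛ
  linarith

theorem le_regulator_of_tendsto_nhdsLT (hφ : ∀ t, 0 ≤ t → 0 ≤ φ t) (ht : 0 < t)
    {l L : ℝ} (hl : Tendsto φ (𝓝[<] t) (𝓝 l)) (hL : Tendsto (regulator φ a) (𝓝[<] t) (𝓝 L))
    (hΛ : 0 < doubleReflection φ a t) : L ≤ regulator φ a t := by
  by_contra! hLt
  have hLl : L ≤ l := by
    refine le_of_tendsto_of_tendsto hL hl ?_
    filter_upwards [Ioo_mem_nhdsLT ht] with u hu using regulator_le_self hφ hu.1.le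
  obtain ⟨c, hηc, hcL⟩ := exists_between hLt
  obtain ⟨s', hs't, hsub⟩ := mem_nhdsLT_iff_exists_Ioo_subset.1 <|
    ((hL.eventually (lt_mem_nhds hcL)).and (hl.eventually (lt_mem_nhds (hcL.trans_le hLl)))).and
      (Ioo_mem_nhdsLT ht)
  obtain ⟨s, hs's, hst⟩ := exists_between (mem_Iio.1 hs't)
  obtain ⟨⟨hηs, -⟩, hs0, -⟩ := hsub ⟨hs's, hst⟩
  obtain ⟨r, hr, hcr⟩ := exists_lt_regulatorTerm hs0.le hηs
  have hI : min c (φ t) ≤ runningInf φ s t := le_runningInf hst.le fun u hu => by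
    rcases hu.2.lt_or_eq with hut | hut
    · exact (min_le_left _ _).trans (hsub ⟨hs's.trans_le hu.1, hut⟩).1.2.le
    · exact hut ▸ min_le_right _ _
  have hmin := (le_min ((min_le_left _ _).trans hcr.le) hI).trans
    (min_le_regulator hφ hr.1 hr.2 hst.le)
  rw [doubleReflection_eq] at hΛ
  exact hmin.not_gt (lt_min hηc (by linarith))

noncomputable def overshootSup (φ : ℝ → ℝ) (a v x : ℝ) : ℝ := sSup (overshoot φ a '' Ioc v x)

section Band

variable {v w b : ℝ}

theorem overshoot_le_of_mem_Ico (hφ : ∀ t, 0 ≤ t → 0 ≤ φ t) (ha : 0 ≤ a)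
    (hosc : ∀ x ∈ Ico v w, ∀ y ∈ Ico v w, φ x ≤ φ y + a) (hv : 0 ≤ v) (hs : s ∈ Ico v w) :
    overshoot φ a s ≤ φ v + a :=
  (overshoot_le hφ ha (hv.trans hs.1)).trans (hosc s hs v ⟨le_rfl, hs.1.trans_lt hs.2⟩)

theorem overshootSup_nonneg : 0 ≤ overshootSup φ a v t :=
  Real.sSup_nonneg (by rintro _ ⟨z, -, rfl⟩; exact overshoot_nonneg)

theorem overshootSup_le (hφ : ∀ t, 0 ≤ t → 0 ≤ φ t) (ha : 0 ≤ a)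
    (hosc : ∀ x ∈ Ico v w, ∀ y ∈ Ico v w, φ x ≤ φ y + a) (hv : 0 ≤ v) (htw : t < w) :
    overshootSup φ a v t ≤ φ v + a :=
  Real.sSup_le (by
    rintro _ ⟨z, hz, rfl⟩
    exact overshoot_le_of_mem_Ico hφ ha hosc hv ⟨hz.1.le, hz.2.trans_lt htw⟩)
    (by linarith [hφ v hv])

theorem le_overshootSup (hφ : ∀ t, 0 ≤ t → 0 ≤ φ t) (ha : 0 ≤ a)
    (hosc : ∀ x ∈ Ico v w, ∀ y ∈ Ico v w, φ x ≤ φ y + a) (hv : 0 ≤ v) (htw : t < w)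
    (hs : s ∈ Ioc v t) : overshoot φ a s ≤ overshootSup φ a v t := by
  refine le_csSup ⟨φ v + a, ?_⟩ (mem_image_of_mem _ hs)
  rintro _ ⟨z, hz, rfl⟩
  exact overshoot_le_of_mem_Ico hφ ha hosc hv ⟨hz.1.le, hz.2.trans_lt htw⟩

theorem overshootSup_mono (hφ : ∀ t, 0 ≤ t → 0 ≤ φ t) (ha : 0 ≤ a)
    (hosc : ∀ x ∈ Ico v w, ∀ y ∈ Ico v w, φ x ≤ φ y + a) (hv : 0 ≤ v) (hst : s ≤ t) (htw : t < w) :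
    overshootSup φ a v s ≤ overshootSup φ a v t :=
  Real.sSup_le (by
    rintro _ ⟨z, hz, rfl⟩
    exact le_overshootSup hφ ha hosc hv htw ⟨hz.1, hz.2.trans hst⟩) overshootSup_nonneg

/-- Since `φ` drops by at most `a` on `[v, w)`, no overshoot there is cut down by the running
infimum. -/
theorem overshootSup_le_regulator (hφ : ∀ t, 0 ≤ t → 0 ≤ φ t)
    (hosc : ∀ x ∈ Ico v w, ∀ y ∈ Ico v w, φ x ≤ φ y + a) (hv : 0 ≤ v) (hvt : v ≤ t) (htw : t < w) :
    overshootSup φ a v t ≤ regulator φ a t := by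
  refine Real.sSup_le ?_ (regulator_nonneg hφ (hv.trans hvt))
  rintro _ ⟨s, hs, rfl⟩
  have hs0 : 0 ≤ s := hv.trans hs.1.le
  have hsI : overshoot φ a s ≤ runningInf φ s t := le_runningInf hs.2 fun u hu =>
    overshoot_le_of_le
      (by linarith [hosc s ⟨hs.1.le, hs.2.trans_lt htw⟩ u ⟨hs.1.le.trans hu.1, hu.2.trans_lt htw⟩])
      (hφ u (hs0.trans hu.1))
  calc overshoot φ a s = regulatorTerm φ a s t := (min_eq_left hsI).symm
    _ ≤ regulator φ a t := regulatorTerm_le_regulator hφ hs0 hs.2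

theorem posPart_regulator_sub_le (hφ : ∀ t, 0 ≤ t → 0 ≤ φ t) (ha : 0 ≤ a)
    (hosc : ∀ x ∈ Ico v w, ∀ y ∈ Ico v w, φ x ≤ φ y + a) (hv : 0 ≤ v) (hvt : v ≤ t) (htb : t ≤ b)
    (hbw : b < w) :
    (regulator φ a b - regulator φ a t)⁺ ≤ overshootSup φ a v b - overshootSup φ a v t := by
  rcases le_or_gt (regulator φ a b) (regulator φ a t) with h | h
  · rw [posPart_eq_zero.2 (sub_nonpos.2 h)]
    exact sub_nonneg.2 (overshootSup_mono hφ ha hosc hv htb hbw)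
  have hb : regulator φ a b ≤ overshootSup φ a v b :=
    (le_max_iff.1 (regulator_le_max hφ (hv.trans hvt) htb fun u hu =>
      le_overshootSup hφ ha hosc hv hbw ⟨hvt.trans_lt hu.1, hu.2⟩)).resolve_left h.not_ge
  rw [posPart_eq_self.2 (sub_nonneg.2 h.le)]
  linarith [overshootSup_le_regulator hφ hosc hv hvt (htb.trans_lt hbw)]

/-- The positive increments of the regulator are dominated by those of `g`, a monotone extension of
the running supremum of the overshoot. -/
theorem boundedVariationOn_regulator_of_oscillation_le (hφ : ∀ t, 0 ≤ t → 0 ≤ φ t) (ha : 0 ≤ a)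
    (hosc : ∀ x ∈ Ico v w, ∀ y ∈ Ico v w, φ x ≤ φ y + a) (hv : 0 ≤ v) (hvw : v < w) :
    BoundedVariationOn (regulator φ a) (Icc v w) := by
  set M := φ v + a + regulator φ a w
  have hM : φ v + a ≤ M := by linarith [regulator_nonneg hφ (a := a) (hv.trans hvw.le)]
  set g : ℝ → ℝ := fun x => if x < w then overshootSup φ a v x else M
  have hg : ∀ x, 0 ≤ g x ∧ g x ≤ M := fun x => by
    by_cases hx : x < w
    · simp only [g, if_pos hx]
      exact ⟨overshootSup_nonneg, by linarith [overshootSup_le hφ ha hosc hv hx]⟩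
    · simp only [g, if_neg hx]
      exact ⟨by linarith [hφ v hv], le_rfl⟩
  have hstep : ∀ t ∈ Icc v w, ∀ b ∈ Icc v w, t ≤ b →
      (regulator φ a b - regulator φ a t)⁺ ≤ g b - g t := by
    intro t ht b hb htb
    rcases hb.2.lt_or_eq with hbw | hbw
    · simp only [g, if_pos hbw, if_pos (htb.trans_lt hbw)]
      exact posPart_regulator_sub_le hφ ha hosc hv ht.1 htb hbw
    rcases ht.2.lt_or_eq with htw | htw
    · simp only [g, if_pos htw, hbw, lt_irrefl, if_false]
      have h : (regulator φ a w - regulator φ a t)⁺ ≤ regulator φ a w :=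
        max_le (by linarith [regulator_nonneg hφ (a := a) (hv.trans ht.1)])
          (regulator_nonneg hφ (hv.trans hvw.le))
      linarith [overshootSup_le hφ ha hosc hv htw]
    · simp [hbw, htw]
  refine boundedVariationOn_of_sum_posPart_le (m := 0) (M := M) (C := M)
    (fun x hx => regulator_nonneg hφ (hv.trans hx.1)) (fun x hx => ?_) fun n u hu us => ?_
  · rcases hx.2.lt_or_eq with hxw | hxw
    · linarith [regulator_le_self hφ (a := a) (hv.trans hx.1), hosc x ⟨hx.1, hxw⟩ v ⟨le_rfl, hvw⟩]
    · rw [hxw]; linarith [hφ v hv]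
  calc ∑ i ∈ Finset.range n, (regulator φ a (u (i + 1)) - regulator φ a (u i))⁺
      ≤ ∑ i ∈ Finset.range n, (g (u (i + 1)) - g (u i)) :=
        Finset.sum_le_sum fun i _ => hstep _ (us i) _ (us (i + 1)) (hu (Nat.le_succ i))
    _ = g (u n) - g (u 0) := Finset.sum_range_sub (fun i => g (u i)) n
    _ ≤ M := by linarith [(hg (u n)).2, (hg (u 0)).1]

end Band

theorem boundedVariationOn_regulator_Icc (hφ : ∀ t, 0 ≤ t → 0 ≤ φ t) (ha : 0 < a)
    (hrc : ∀ t, 0 ≤ t → ContinuousWithinAt φ (Ici t) t)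
    (hll : ∀ t, 0 < t → ∃ l, Tendsto φ (𝓝[<] t) (𝓝 l)) (T : ℝ) :
    BoundedVariationOn (regulator φ a) (Icc 0 T) := by
  refine boundedVariationOn_Icc_of_forall_exists (fun x hx => ?_) (fun x hx => ?_)
  · obtain ⟨w, hxw, hosc⟩ := exists_gt_forall_Ico_le_add (hrc x hx.1) ha
    exact ⟨w, hxw, boundedVariationOn_regulator_of_oscillation_le hφ ha.le hosc hx.1 hxw⟩
  · obtain ⟨l, hl⟩ := hll x hx.1
    obtain ⟨v, hvx, hosc⟩ := exists_lt_forall_Ioo_le_add hl ha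
    obtain ⟨v', hvv', hv'x⟩ := exists_between (max_lt hvx hx.1)
    have hv' : v < v' := (le_max_left v 0).trans_lt hvv'
    refine ⟨v', hv'x, boundedVariationOn_regulator_of_oscillation_le hφ ha.le
      (fun y hy z hz => hosc y ⟨hv'.trans_le hy.1, hy.2⟩ z ⟨hv'.trans_le hz.1, hz.2⟩)
      ((le_max_right v 0).trans hvv'.le) hv'x⟩

noncomputable def regulatorExt (φ : ℝ → ℝ) (a t : ℝ) : ℝ := regulator φ a (max t 0)

theorem regulatorExt_of_nonneg (ht : 0 ≤ t) : regulatorExt φ a t = regulator φ a t := by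
  rw [regulatorExt, max_eq_left ht]

theorem locallyBoundedVariationOn_regulatorExt (hφ : ∀ t, 0 ≤ t → 0 ≤ φ t) (ha : 0 < a)
    (hrc : ∀ t, 0 ≤ t → ContinuousWithinAt φ (Ici t) t)
    (hll : ∀ t, 0 < t → ∃ l, Tendsto φ (𝓝[<] t) (𝓝 l)) :
    LocallyBoundedVariationOn (regulatorExt φ a) univ := fun _ y _ _ =>
  ne_top_of_le_ne_top (boundedVariationOn_regulator_Icc hφ ha hrc hll (max y 0)) <|
    eVariationOn.comp_le_of_monotoneOn (regulator φ a) (fun t => max t 0)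
      ((monotone_id.max monotone_const).monotoneOn _)
      fun _ ht => ⟨le_max_right _ _, max_le_max ht.2.2 le_rfl⟩

theorem regulatorExt_continuousWithinAt (hφ : ∀ t, 0 ≤ t → 0 ≤ φ t) (ha : 0 ≤ a)
    (hrc : ∀ t, 0 ≤ t → ContinuousWithinAt φ (Ici t) t) (x : ℝ) :
    ContinuousWithinAt (regulatorExt φ a) (Ici x) x :=
  (regulator_continuousWithinAt hφ ha (le_max_right x 0) (hrc _ (le_max_right x 0))).comp
    (f := fun t => max t 0) (continuous_id.max continuous_const).continuousWithinAt
    fun _ ht => max_le_max (mem_Ici.1 ht) le_rfl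

theorem tendsto_regulator_nhdsLT (hf : LocallyBoundedVariationOn (regulatorExt φ a) univ)
    (ht : 0 < t) :
    Tendsto (regulator φ a) (𝓝[<] t) (𝓝 (Function.leftLim (regulatorExt φ a) t)) := by
  refine (hf.tendsto_leftLim t).congr' ?_
  filter_upwards [Ioo_mem_nhdsLT ht] with u hu using regulatorExt_of_nonneg hu.1.le

theorem leftLim_regulatorExt_zero : Function.leftLim (regulatorExt φ a) 0 = regulator φ a 0 := by
  refine leftLim_eq_of_tendsto (tendsto_const_nhds.congr' ?_)
  filter_upwards [self_mem_nhdsWithin] with u hu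
  rw [regulatorExt, max_eq_right (le_of_lt hu)]

theorem regulatorExt_le_leftLim (hφ : ∀ t, 0 ≤ t → 0 ≤ φ t) (ha : 0 ≤ a)
    (hll : ∀ t, 0 < t → ∃ l, Tendsto φ (𝓝[<] t) (𝓝 l))
    (hf : LocallyBoundedVariationOn (regulatorExt φ a) univ) (ht : 0 ≤ t)
    (hΛ : doubleReflection φ a t < a) :
    regulatorExt φ a t ≤ Function.leftLim (regulatorExt φ a) t := by
  rw [regulatorExt_of_nonneg ht]
  rcases ht.eq_or_lt with ht | ht
  · rw [← ht, leftLim_regulatorExt_zero]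
  obtain ⟨l, hl⟩ := hll t ht
  exact regulator_le_of_tendsto_nhdsLT hφ ha ht hl (tendsto_regulator_nhdsLT hf ht) hΛ

theorem leftLim_le_regulatorExt (hφ : ∀ t, 0 ≤ t → 0 ≤ φ t)
    (hll : ∀ t, 0 < t → ∃ l, Tendsto φ (𝓝[<] t) (𝓝 l))
    (hf : LocallyBoundedVariationOn (regulatorExt φ a) univ) (ht : 0 ≤ t)
    (hΛ : 0 < doubleReflection φ a t) :
    Function.leftLim (regulatorExt φ a) t ≤ regulatorExt φ a t := by
  rw [regulatorExt_of_nonneg ht]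
  rcases ht.eq_or_lt with ht | ht
  · rw [← ht, leftLim_regulatorExt_zero]
  obtain ⟨l, hl⟩ := hll t ht
  exact le_regulator_of_tendsto_nhdsLT hφ ht hl (tendsto_regulator_nhdsLT hf ht) hΛ

theorem antitoneOn_regulatorExt (hφ : ∀ t, 0 ≤ t → 0 ≤ φ t) (ha : 0 ≤ a)
    (hrc : ∀ t, 0 ≤ t → ContinuousWithinAt φ (Ici t) t) {x y : ℝ}
    (h : Icc x y ⊆ {s | 0 ≤ s ∧ doubleReflection φ a s < a}) :
    AntitoneOn (regulatorExt φ a) (Icc x y) := by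
  intro p hp q hq hpq
  rw [regulatorExt_of_nonneg (h hp).1, regulatorExt_of_nonneg (h hq).1]
  by_contra! hlt
  obtain ⟨r, hr, hηr⟩ := exists_regulator_eq_sub_of_lt hφ ha hrc (h hp).1 hpq hlt
  have hΛ := (h ⟨hp.1.trans hr.1.le, hr.2.trans hq.2⟩).2
  rw [doubleReflection_eq, hηr] at hΛ
  linarith

theorem monotoneOn_regulatorExt (hφ : ∀ t, 0 ≤ t → 0 ≤ φ t)
    (hrc : ∀ t, 0 ≤ t → ContinuousWithinAt φ (Ici t) t) {x y : ℝ}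
    (h : Icc x y ⊆ {s | 0 ≤ s ∧ 0 < doubleReflection φ a s}) :
    MonotoneOn (regulatorExt φ a) (Icc x y) := by
  intro p hp q hq hpq
  rw [regulatorExt_of_nonneg (h hp).1, regulatorExt_of_nonneg (h hq).1]
  by_contra! hlt
  obtain ⟨r, hr, hηr⟩ := exists_regulator_eq_of_lt hφ hrc (h hp).1 hpq hlt
  have hΛ := (h ⟨hp.1.trans hr.1, hr.2.trans hq.2⟩).2
  rw [doubleReflection_eq, hηr, sub_self] at hΛ
  exact hΛ.false

theorem exists_Ico_subset_setOf_doubleReflection_mem (hφ : ∀ t, 0 ≤ t → 0 ≤ φ t) (ha : 0 ≤ a)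
    (hrc : ∀ t, 0 ≤ t → ContinuousWithinAt φ (Ici t) t) {O : Set ℝ} (hO : IsOpen O) {x : ℝ}
    (hx : x ∈ {s | 0 ≤ s ∧ doubleReflection φ a s ∈ O}) :
    ∃ y > x, Ico x y ⊆ {s | 0 ≤ s ∧ doubleReflection φ a s ∈ O} := by
  have hΛ : ContinuousWithinAt (doubleReflection φ a) (Ici x) x :=
    (hrc x hx.1).sub (regulator_continuousWithinAt hφ ha hx.1 (hrc x hx.1))
  obtain ⟨y, hxy, hsub⟩ := mem_nhdsGE_iff_exists_Ico_subset.1 (hΛ (hO.mem_nhds hx.2))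
  exact ⟨y, hxy, fun s hs => ⟨hx.1.trans hs.1, hsub hs⟩⟩

theorem posVariationStieltjes_measure_setOf_lt_eq_zero (hφ : ∀ t, 0 ≤ t → 0 ≤ φ t) (ha : 0 ≤ a)
    (hrc : ∀ t, 0 ≤ t → ContinuousWithinAt φ (Ici t) t)
    (hll : ∀ t, 0 < t → ∃ l, Tendsto φ (𝓝[<] t) (𝓝 l))
    (hf : LocallyBoundedVariationOn (regulatorExt φ a) univ)
    (hf' : ∀ x, ContinuousWithinAt (regulatorExt φ a) (Ici x) x) :
    (posVariationStieltjes hf hf').measure {s | 0 ≤ s ∧ doubleReflection φ a s < a} = 0 :=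
  StieltjesFunction.measure_eq_zero_of_forall_Icc _
    (fun _ hx => exists_Ico_subset_setOf_doubleReflection_mem hφ ha hrc isOpen_Iio hx)
    fun _ _ hxy h => posVariationStieltjes_measure_Icc_eq_zero hf hf' hxy
      (antitoneOn_regulatorExt hφ ha hrc h)
      (regulatorExt_le_leftLim hφ ha hll hf (h ⟨le_rfl, hxy⟩).1 (h ⟨le_rfl, hxy⟩).2)

theorem negVariationStieltjes_measure_setOf_pos_eq_zero (hφ : ∀ t, 0 ≤ t → 0 ≤ φ t) (ha : 0 ≤ a)
    (hrc : ∀ t, 0 ≤ t → ContinuousWithinAt φ (Ici t) t)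
    (hll : ∀ t, 0 < t → ∃ l, Tendsto φ (𝓝[<] t) (𝓝 l))
    (hf : LocallyBoundedVariationOn (regulatorExt φ a) univ)
    (hf' : ∀ x, ContinuousWithinAt (regulatorExt φ a) (Ici x) x) :
    (negVariationStieltjes hf hf').measure {s | 0 ≤ s ∧ 0 < doubleReflection φ a s} = 0 :=
  StieltjesFunction.measure_eq_zero_of_forall_Icc _
    (fun _ hx => exists_Ico_subset_setOf_doubleReflection_mem hφ ha hrc isOpen_Ioi hx)
    fun _ _ hxy h => negVariationStieltjes_measure_Icc_eq_zero hf hf' hxy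
      (monotoneOn_regulatorExt hφ hrc h)
      (leftLim_le_regulatorExt hφ hll hf (h ⟨le_rfl, hxy⟩).1 (h ⟨le_rfl, hxy⟩).2)

end DoubleReflection

open DoubleReflection

/-- For a nonnegative càdlàg `φ` with `φ 0 = 0` and `a > 0`, the doubly
reflected path `Λ_a(φ)` decomposes as `φ - κ₊ + κ₋` with `κ₊, κ₋` nondecreasing càdlàg
(Stieltjes) functions vanishing at `0`, such that the Lebesgue–Stieltjes measure of `κ₊`
does not charge `{s ≥ 0 : Λ_a(φ)(s) < a}` and that of `κ₋` does not charge
`{s ≥ 0 : Λ_a(φ)(s) > 0}`. -/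
theorem stmt3 (φ : ℝ → ℝ) (a : ℝ) (ha : 0 < a) (h0 : φ 0 = 0)
    (hnonneg : ∀ t, 0 ≤ t → 0 ≤ φ t)
    (hrc : ∀ t, 0 ≤ t → ContinuousWithinAt φ (Set.Ici t) t)
    (hll : ∀ t, 0 < t → ∃ l, Filter.Tendsto φ (nhdsWithin t (Set.Iio t)) (nhds l)) :
    ∃ κp κm : StieltjesFunction ℝ,
      κp 0 = 0 ∧ κm 0 = 0 ∧
      (∀ t, 0 ≤ t → doubleReflection φ a t = φ t - κp t + κm t) ∧
      κp.measure {s | 0 ≤ s ∧ doubleReflection φ a s < a} = 0 ∧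
      κm.measure {s | 0 ≤ s ∧ 0 < doubleReflection φ a s} = 0 := by
  have hf := locallyBoundedVariationOn_regulatorExt hnonneg ha hrc hll
  have hf' := regulatorExt_continuousWithinAt hnonneg ha.le hrc
  refine ⟨posVariationStieltjes hf hf', negVariationStieltjes hf hf', posVariation_zero,
    negVariation_zero, fun t ht => ?_,
    posVariationStieltjes_measure_setOf_lt_eq_zero hnonneg ha.le hrc hll hf hf',
    negVariationStieltjes_measure_setOf_pos_eq_zero hnonneg ha.le hrc hll hf hf'⟩
  have h := posVariation_sub_negVariation (f := regulatorExt φ a) t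
  rw [regulatorExt_of_nonneg ht, regulatorExt_of_nonneg le_rfl, regulator_zero hnonneg h0] at h
  change doubleReflection φ a t = φ t - posVariation _ t + negVariation _ t
  rw [doubleReflection_eq]
  linarith
end

section
/- Let μ be a finite nonnegative Borel measure on ℝ and x ∈ ℝ. Define Ψ(μ, x) to be the measure whose cumulative distribution function is y ↦ (μ(-∞, y] - x)^+. Then Ψ(μ, x) is a well-defined finite nonnegative Borel measure on ℝ, and the map (μ, x) ↦ Ψ(μ, x) is continuous from M(ℝ) × ℝ to M(ℝ), where M(ℝ) carries the topology of weak convergence. -/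
/-!
Write `μ = m • P` with `P` a probability measure. Then `Ψ(μ, x)` is the Stieltjes measure of
`y ↦ (m F_P(y) - x)⁺`, so it depends continuously on `(P, m, x)` once its values on the intervals
`(a, b]` do, for `a, b` outside the countable set of atoms of `P`: at such points `F_P` is
continuous in `P` by the portmanteau theorem. These intervals form a π-system containing
arbitrarily small neighbourhoods of every point, and convergence on it together with convergence
of the masses characterises weak convergence along countably generated filters. This is why the
argument runs on `(P, m, x)`, whose space is metrizable, and not on `(μ, x)`; the point `μ = 0`,
where `P` is not determined by `μ`, is handled by the masses alone.
-/

open MeasureTheory Set Filter Topology ProbabilityTheory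
open scoped NNReal

namespace StieltjesFunction

variable {R : Type*} [LinearOrder R] [TopologicalSpace R]

def comp (f : StieltjesFunction R) {g : ℝ → ℝ} (hg : Monotone g) (hg' : Continuous g) :
    StieltjesFunction R where
  toFun := g ∘ f
  mono' := hg.comp f.mono
  right_continuous' x := hg'.continuousAt.comp_continuousWithinAt (f.right_continuous x)

lemma coe_comp (f : StieltjesFunction R) {g : ℝ → ℝ} (hg : Monotone g) (hg' : Continuous g) :
    ⇑(f.comp hg hg') = g ∘ f := rfl

end StieltjesFunction

lemma Set.Countable.exists_Ioc_mem_nhds_subset {A : Set ℝ} (hA : A.Countable) {u : Set ℝ}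
    (hu : IsOpen u) {x : ℝ} (hx : x ∈ u) :
    ∃ a ∉ A, ∃ b ∉ A, Ioc a b ∈ 𝓝 x ∧ Ioc a b ⊆ u := by
  obtain ⟨l, r, ⟨hlx, hxr⟩, hsub⟩ := mem_nhds_iff_exists_Ioo_subset.1 (hu.mem_nhds hx)
  have hdense := hA.dense_compl ℝ
  obtain ⟨a, ha, hla, hax⟩ := hdense.exists_between hlx
  obtain ⟨b, hb, hxb, hbr⟩ := hdense.exists_between hxr
  exact ⟨a, ha, b, hb, Ioc_mem_nhds hax hxb,
    (Ioc_subset_Ioo_right hbr).trans ((Ioo_subset_Ioo_left hla.le).trans hsub)⟩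

lemma isPiSystem_Ioc_of_notMem (A : Set ℝ) :
    IsPiSystem {s | ∃ a ∉ A, ∃ b ∉ A, s = Ioc a b} := by
  rintro _ ⟨a, ha, b, hb, rfl⟩ _ ⟨c, hc, d, hd, rfl⟩ -
  refine ⟨max a c, ?_, min b d, ?_, Ioc_inter_Ioc⟩
  · rcases max_choice a c with h | h <;> rwa [h]
  · rcases min_choice b d with h | h <;> rwa [h]

namespace MeasureTheory

theorem ProbabilityMeasure.tendsto_of_tendsto_measure_Ioc {ι : Type*} {l : Filter ι}
    [l.IsCountablyGenerated] {μs : ι → ProbabilityMeasure ℝ} {μ : ProbabilityMeasure ℝ}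
    {A : Set ℝ} (hA : A.Countable)
    (h : ∀ a ∉ A, ∀ b ∉ A, Tendsto (fun i ↦ μs i (Ioc a b)) l (𝓝 (μ (Ioc a b)))) :
    Tendsto μs l (𝓝 μ) := by
  refine (isPiSystem_Ioc_of_notMem A).tendsto_probabilityMeasure_of_tendsto_of_mem ?_
    (fun u hu x hx ↦ ?_) ?_
  · rintro _ ⟨a, -, b, -, rfl⟩
    exact measurableSet_Ioc
  · obtain ⟨a, ha, b, hb, hnhds, hsub⟩ := hA.exists_Ioc_mem_nhds_subset hu hx
    exact ⟨_, ⟨a, ha, b, hb, rfl⟩, hnhds, hsub⟩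
  · rintro _ ⟨a, ha, b, hb, rfl⟩
    exact h a ha b hb

theorem FiniteMeasure.tendsto_of_tendsto_measure_Ioc {ι : Type*} {l : Filter ι}
    [l.IsCountablyGenerated] {μs : ι → FiniteMeasure ℝ} {μ : FiniteMeasure ℝ}
    {A : Set ℝ} (hA : A.Countable)
    (h : ∀ a ∉ A, ∀ b ∉ A, Tendsto (fun i ↦ μs i (Ioc a b)) l (𝓝 (μ (Ioc a b))))
    (hmass : Tendsto (fun i ↦ (μs i).mass) l (𝓝 μ.mass)) :
    Tendsto μs l (𝓝 μ) := by
  rcases eq_or_ne μ 0 with rfl | hμ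
  · exact tendsto_zero_of_tendsto_zero_mass (by simpa using hmass)
  have hmass₀ : μ.mass ≠ 0 := μ.mass_nonzero_iff.2 hμ
  refine tendsto_of_tendsto_normalize_testAgainstNN_of_tendsto_mass ?_ hmass
  refine ProbabilityMeasure.tendsto_of_tendsto_measure_Ioc hA fun a ha b hb ↦ ?_
  have hne : ∀ᶠ i in l, μs i ≠ 0 := by
    filter_upwards [hmass.eventually_ne hmass₀] with i hi
    exact (μs i).mass_nonzero_iff.1 hi
  rw [μ.normalize_eq_of_nonzero hμ]
  refine Tendsto.congr' ?_ ((hmass.inv₀ hmass₀).mul (h a ha b hb))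
  filter_upwards [hne] with i hi
  exact ((μs i).normalize_eq_of_nonzero hi _).symm

lemma ProbabilityMeasure.cdf_eq (P : ProbabilityMeasure ℝ) (y : ℝ) :
    cdf (P : Measure ℝ) y = P (Iic y) := by
  rw [cdf_eq_real]
  rfl

end MeasureTheory

noncomputable section

def truncCDF (P : ProbabilityMeasure ℝ) (m : ℝ≥0) (x : ℝ) : StieltjesFunction ℝ :=
  (cdf P).comp (g := fun t ↦ max (m * t - x) 0)
    (show Monotone _ from fun _ _ h ↦ max_le_max_right 0 (by gcongr)) (by fun_prop)

lemma truncCDF_apply (P : ProbabilityMeasure ℝ) (m : ℝ≥0) (x y : ℝ) :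
    truncCDF P m x y = max (m * P (Iic y) - x) 0 := by
  rw [truncCDF, StieltjesFunction.coe_comp, Function.comp_apply, ProbabilityMeasure.cdf_eq]

lemma tendsto_truncCDF_atBot (P : ProbabilityMeasure ℝ) (m : ℝ≥0) (x : ℝ) :
    Tendsto (truncCDF P m x) atBot (𝓝 (max (-x) 0)) := by
  have : Continuous fun t : ℝ ↦ max (m * t - x) 0 := by fun_prop
  simpa [truncCDF, StieltjesFunction.coe_comp] using (this.tendsto 0).comp (tendsto_cdf_atBot P)

lemma tendsto_truncCDF_atTop (P : ProbabilityMeasure ℝ) (m : ℝ≥0) (x : ℝ) :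
    Tendsto (truncCDF P m x) atTop (𝓝 (max (m - x) 0)) := by
  have : Continuous fun t : ℝ ↦ max (m * t - x) 0 := by fun_prop
  simpa [truncCDF, StieltjesFunction.coe_comp] using (this.tendsto 1).comp (tendsto_cdf_atTop P)

lemma tendsto_truncCDF {P : ProbabilityMeasure ℝ} {m : ℝ≥0} {x y : ℝ}
    (hy : (P : Measure ℝ) {y} = 0) :
    Tendsto (fun q : ProbabilityMeasure ℝ × ℝ≥0 × ℝ ↦ truncCDF q.1 q.2.1 q.2.2 y) (𝓝 (P, m, x))
      (𝓝 (truncCDF P m x y)) := by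
  simp only [truncCDF_apply]
  have hIic : Tendsto (fun q : ProbabilityMeasure ℝ × ℝ≥0 × ℝ ↦ q.1 (Iic y)) (𝓝 (P, m, x))
      (𝓝 (P (Iic y))) :=
    ProbabilityMeasure.tendsto_measure_of_null_frontier_of_tendsto continuousAt_fst
      (by simpa [frontier_Iic] using hy)
  have hm : Tendsto (fun q : ProbabilityMeasure ℝ × ℝ≥0 × ℝ ↦ (q.2.1 : ℝ)) (𝓝 (P, m, x)) (𝓝 m) :=
    (NNReal.continuous_coe.comp (continuous_fst.comp continuous_snd)).continuousAt
  have hx : Tendsto (fun q : ProbabilityMeasure ℝ × ℝ≥0 × ℝ ↦ q.2.2) (𝓝 (P, m, x)) (𝓝 x) :=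
    (continuous_snd.comp continuous_snd).continuousAt
  exact ((hm.mul (NNReal.tendsto_coe.2 hIic)).sub hx).max tendsto_const_nhds

def truncMeasure (P : ProbabilityMeasure ℝ) (m : ℝ≥0) (x : ℝ) : FiniteMeasure ℝ :=
  ⟨(truncCDF P m x).measure,
    (truncCDF P m x).isFiniteMeasure (tendsto_truncCDF_atBot P m x) (tendsto_truncCDF_atTop P m x)⟩

lemma truncMeasure_apply_Ioc (P : ProbabilityMeasure ℝ) (m : ℝ≥0) (x a b : ℝ) :
    truncMeasure P m x (Ioc a b) = (truncCDF P m x b - truncCDF P m x a).toNNReal := by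
  simp [truncMeasure, StieltjesFunction.measure_Ioc, ENNReal.ofReal]

lemma truncMeasure_apply_Iic (P : ProbabilityMeasure ℝ) (m : ℝ≥0) (x y : ℝ) :
    truncMeasure P m x (Iic y) = (truncCDF P m x y - max (-x) 0).toNNReal := by
  simp [truncMeasure, StieltjesFunction.measure_Iic _ (tendsto_truncCDF_atBot P m x), ENNReal.ofReal]

lemma truncMeasure_mass (P : ProbabilityMeasure ℝ) (m : ℝ≥0) (x : ℝ) :
    (truncMeasure P m x).mass = (max (m - x) 0 - max (-x) 0).toNNReal := by
  simp [truncMeasure, FiniteMeasure.mass, StieltjesFunction.measure_univ _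
    (tendsto_truncCDF_atBot P m x) (tendsto_truncCDF_atTop P m x), ENNReal.ofReal]

theorem continuous_truncMeasure :
    Continuous fun q : ProbabilityMeasure ℝ × ℝ≥0 × ℝ ↦ truncMeasure q.1 q.2.1 q.2.2 := by
  refine continuous_iff_continuousAt.2 fun ⟨P, m, x⟩ ↦ ?_
  have hatoms : {y : ℝ | 0 < (P : Measure ℝ) {y}}.Countable :=
    Measure.countable_meas_pos_of_disjoint_iUnion (fun _ ↦ measurableSet_singleton _)
      fun _ _ h ↦ disjoint_singleton.2 h
  refine FiniteMeasure.tendsto_of_tendsto_measure_Ioc hatoms (fun a ha b hb ↦ ?_) ?_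
  · simp only [truncMeasure_apply_Ioc]
    refine continuous_real_toNNReal.continuousAt.tendsto.comp
      ((tendsto_truncCDF ?_).sub (tendsto_truncCDF ?_))
    · exact nonpos_iff_eq_zero.1 (not_lt.1 hb)
    · exact nonpos_iff_eq_zero.1 (not_lt.1 ha)
  · simp only [truncMeasure_mass]
    exact Continuous.tendsto (by fun_prop) _

def removeLowerMass (p : FiniteMeasure ℝ × ℝ) : FiniteMeasure ℝ :=
  truncMeasure p.1.normalize p.1.mass p.2

lemma truncCDF_normalize (μ : FiniteMeasure ℝ) (x y : ℝ) :
    truncCDF μ.normalize μ.mass x y = max (μ (Iic y) - x) 0 := by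
  rw [truncCDF_apply, ← NNReal.coe_mul, ← μ.self_eq_mass_mul_normalize]

lemma removeLowerMass_mass (p : FiniteMeasure ℝ × ℝ) :
    (removeLowerMass p).mass = (max (p.1.mass - p.2) 0 - max (-p.2) 0).toNNReal :=
  truncMeasure_mass _ _ _

theorem continuous_removeLowerMass : Continuous removeLowerMass := by
  refine continuous_iff_continuousAt.2 fun ⟨μ, x⟩ ↦ ?_
  rcases eq_or_ne μ 0 with rfl | hμ
  · have hzero : removeLowerMass (0, x) = 0 := by
      rw [← FiniteMeasure.mass_zero_iff, removeLowerMass_mass]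
      simp
    have hmass : Continuous fun p ↦ (removeLowerMass p).mass := by
      simp only [removeLowerMass_mass]
      fun_prop
    rw [ContinuousAt, hzero]
    refine FiniteMeasure.tendsto_zero_of_tendsto_zero_mass ?_
    simpa [hzero] using hmass.tendsto (0, x)
  · have hnormalize : Tendsto (fun p : FiniteMeasure ℝ × ℝ ↦ p.1.normalize) (𝓝 (μ, x))
        (𝓝 μ.normalize) :=
      FiniteMeasure.tendsto_normalize_of_tendsto continuousAt_fst hμ
    have hsplit : ContinuousAt (fun p : FiniteMeasure ℝ × ℝ ↦ (p.1.normalize, p.1.mass, p.2))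
        (μ, x) :=
      hnormalize.prodMk_nhds
        ((by fun_prop : Continuous fun p : FiniteMeasure ℝ × ℝ ↦ (p.1.mass, p.2)).continuousAt)
    exact (continuous_truncMeasure.continuousAt.comp hsplit :)

end

/-- There is a map `Ψ : M(ℝ) × ℝ → M(ℝ)` on finite nonnegative Borel
measures such that `Ψ(μ, x)` is the measure whose distribution function is
`y ↦ (μ(-∞, y] - x)⁺` (expressed via its increments over half-open intervals, and via
the genuine CDF identity when `x ≥ 0`), and `Ψ` is continuous with respect to the weak
topology on `M(ℝ)`. -/
theorem stmt4 :
    ∃ Ψ : FiniteMeasure ℝ × ℝ → FiniteMeasure ℝ,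
      Continuous Ψ ∧
      (∀ (μ : FiniteMeasure ℝ) (x y₁ y₂ : ℝ), y₁ ≤ y₂ →
        ((Ψ (μ, x) (Set.Ioc y₁ y₂) : ℝ≥0) : ℝ)
          = max (((μ (Set.Iic y₂) : ℝ≥0) : ℝ) - x) 0
            - max (((μ (Set.Iic y₁) : ℝ≥0) : ℝ) - x) 0) ∧
      (∀ (μ : FiniteMeasure ℝ) (x y : ℝ), 0 ≤ x →
        ((Ψ (μ, x) (Set.Iic y) : ℝ≥0) : ℝ)
          = max (((μ (Set.Iic y) : ℝ≥0) : ℝ) - x) 0) := by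
  refine ⟨removeLowerMass, continuous_removeLowerMass, fun μ x y₁ y₂ h ↦ ?_, fun μ x y hx ↦ ?_⟩
  · rw [removeLowerMass, truncMeasure_apply_Ioc, Real.coe_toNNReal _
      (sub_nonneg.2 ((truncCDF _ _ _).mono h)), truncCDF_normalize, truncCDF_normalize]
  · rw [removeLowerMass, truncMeasure_apply_Iic, max_eq_right (neg_nonpos.2 hx), sub_zero,
      truncCDF_normalize, Real.coe_toNNReal _ (le_max_right _ _)]
end

section
/- Let μ : [0, ∞) → M(ℝ) be a càdlàg measure-valued path and define Γ(μ)(t) = sup_{s ∈ [0,t]} [ μ(s)(-∞, 0] ∧ inf_{u ∈ [s,t]} μ(u)(ℝ) ]. Then Γ(μ) is a càdlàg real-valued function on [0, ∞). -/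
/-!
Write `f s = μ(s)(-∞,0]` and `g u = μ(u)(ℝ)`. By portmanteau (`(-∞,0]` is closed)
`f` is upper semicontinuous from the right, and the mass `g` is càdlàg.
As `u ↓ t`, the new indices `s ∈ (t,u]` contribute at most `min (f s) (g s)`, which is eventually
below anything exceeding `min (f t) (g t) ≤ Γ(t)`, while the old ones lose at most the drop of `g`
on `(t,u]`. As `v ↑ t`, `Γ(v)` converges to the same supremum with `[0,t)` and `[s,t)` in place of
`[0,t]` and `[s,t]`: if this value `ℓ` lies below the left limit `L` of `g`, the inf over `(v,t)`
is eventually irrelevant; otherwise `Γ(v) ≤ g(v)` is eventually close to `L ≤ ℓ`.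
-/

open MeasureTheory Set
open scoped NNReal

/-- `Γ(μ)(t) = sup_{s ∈ [0,t]} [ μ(s)(-∞, 0] ∧ inf_{u ∈ [s,t]} μ(u)(ℝ) ]` for a
measure-valued path `μ`. -/
noncomputable def GammaMap (μ : ℝ → FiniteMeasure ℝ) (t : ℝ) : ℝ :=
  sSup ((fun s => min ((μ s (Set.Iic 0) : ℝ≥0) : ℝ)
      (sInf ((fun u => ((μ u Set.univ : ℝ≥0) : ℝ)) '' Set.Icc s t))) '' Set.Icc 0 t)

open Filter Topology

section InfImage

variable {g : ℝ → ℝ} {A B : Set ℝ} {c w : ℝ}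

lemma sInf_image_le_of_mem (hg : BddBelow (range g)) (hw : w ∈ A) : sInf (g '' A) ≤ g w :=
  csInf_le (hg.mono (image_subset_range g A)) (mem_image_of_mem g hw)

lemma sInf_image_anti (hg : BddBelow (range g)) (hA : A.Nonempty) (hAB : A ⊆ B) :
    sInf (g '' B) ≤ sInf (g '' A) :=
  csInf_le_csInf (hg.mono (image_subset_range g B)) (hA.image g) (image_mono hAB)

lemma le_sInf_image_of_le_on_diff (hg : BddBelow (range g)) (hB : B.Nonempty)
    (hA : c ≤ sInf (g '' A)) (hc : ∀ w ∈ B \ A, c ≤ g w) : c ≤ sInf (g '' B) := by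
  refine le_csInf (hB.image g) (forall_mem_image.2 fun w hw => ?_)
  by_cases hwA : w ∈ A
  · exact hA.trans (sInf_image_le_of_mem hg hwA)
  · exact hc w ⟨hw, hwA⟩

end InfImage

section OneSidedNhds

variable {t : ℝ} {p : ℝ → Prop}

lemma eventually_forall_Icc_of_nhdsGE (h : ∀ᶠ w in 𝓝[≥] t, p w) :
    ∀ᶠ u in 𝓝[≥] t, ∀ w ∈ Icc t u, p w := by
  obtain ⟨u, hu, hsub⟩ := mem_nhdsGE_iff_exists_Ico_subset.1 h
  filter_upwards [Ico_mem_nhdsGE hu] with v hv w hw using hsub ⟨hw.1, hw.2.trans_lt hv.2⟩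

lemma eventually_forall_Ioo_of_nhdsLT (h : ∀ᶠ w in 𝓝[<] t, p w) :
    ∀ᶠ v in 𝓝[<] t, ∀ w ∈ Ioo v t, p w := by
  obtain ⟨l, hl, hsub⟩ := mem_nhdsLT_iff_exists_Ioo_subset.1 h
  filter_upwards [Ioo_mem_nhdsLT hl] with v hv w hw using hsub ⟨hv.1.trans hw.1, hw.2⟩

end OneSidedNhds

lemma upperSemicontinuousWithinAt_apply_of_isClosed {Ω α : Type*} [MeasurableSpace Ω]
    [TopologicalSpace Ω] [HasOuterApproxClosed Ω] [OpensMeasurableSpace Ω] [TopologicalSpace α]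
    {μ : α → FiniteMeasure Ω} {S : Set α} {t : α} (hμ : ContinuousWithinAt μ S t)
    {F : Set Ω} (hF : IsClosed F) :
    UpperSemicontinuousWithinAt (fun s => ((μ s F : ℝ≥0) : ℝ)) S t := by
  intro y hy
  have hlt : (μ t : Measure Ω) F < ENNReal.ofReal y := by
    rwa [← FiniteMeasure.ennreal_coeFn_eq_coeFn_toMeasure, ENNReal.coe_lt_ofReal]
  filter_upwards [eventually_lt_of_limsup_lt
    ((FiniteMeasure.limsup_measure_closed_le_of_tendsto hμ hF).trans_lt hlt)] with s hs
  rwa [← FiniteMeasure.ennreal_coeFn_eq_coeFn_toMeasure, ENNReal.coe_lt_ofReal] at hs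

namespace Gamma

noncomputable def term (f g : ℝ → ℝ) (t s : ℝ) : ℝ := min (f s) (sInf (g '' Icc s t))

noncomputable def gammaFun (f g : ℝ → ℝ) (t : ℝ) : ℝ := sSup (term f g t '' Icc 0 t)

noncomputable def termLeft (f g : ℝ → ℝ) (t s : ℝ) : ℝ := min (f s) (sInf (g '' Ico s t))

noncomputable def gammaLeft (f g : ℝ → ℝ) (t : ℝ) : ℝ := sSup (termLeft f g t '' Ico 0 t)

variable {f g : ℝ → ℝ} {s t u v w a b L : ℝ}

lemma term_le (hg : BddBelow (range g)) (hw : w ∈ Icc s t) : term f g t s ≤ g w :=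
  (min_le_right _ _).trans (sInf_image_le_of_mem hg hw)

lemma term_le_min (hg : BddBelow (range g)) (hst : s ≤ t) : term f g t s ≤ min (f s) (g s) :=
  min_le_min le_rfl (sInf_image_le_of_mem hg (left_mem_Icc.2 hst))

lemma term_self : term f g t t = min (f t) (g t) := by
  simp [term]

lemma term_anti (hg : BddBelow (range g)) (hst : s ≤ t) (htu : t ≤ u) :
    term f g u s ≤ term f g t s :=
  min_le_min le_rfl (sInf_image_anti hg (nonempty_Icc.2 hst) (Icc_subset_Icc le_rfl htu))

lemma termLeft_le_term (hg : BddBelow (range g)) (hsv : s ≤ v) (hvt : v < t) :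
    termLeft f g t s ≤ term f g v s :=
  min_le_min le_rfl (sInf_image_anti hg (nonempty_Icc.2 hsv) fun _ hw => ⟨hw.1, hw.2.trans_lt hvt⟩)

lemma term_le_gammaFun (hg : BddBelow (range g)) (hs : s ∈ Icc 0 t) :
    term f g t s ≤ gammaFun f g t :=
  le_csSup ⟨g t, forall_mem_image.2 fun _ hr => term_le hg ⟨hr.2, le_rfl⟩⟩ (mem_image_of_mem _ hs)

lemma gammaFun_le (ht : 0 ≤ t) (h : ∀ s ∈ Icc 0 t, term f g t s ≤ b) : gammaFun f g t ≤ b :=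
  csSup_le ((nonempty_Icc.2 ht).image _) (forall_mem_image.2 h)

lemma gammaFun_le_self (hg : BddBelow (range g)) (ht : 0 ≤ t) : gammaFun f g t ≤ g t :=
  gammaFun_le ht fun _ hs => term_le hg ⟨hs.2, le_rfl⟩

lemma eventually_lt_gammaFun_nhdsGE (hg : BddBelow (range g)) (ht : 0 ≤ t)
    (hgc : ContinuousWithinAt g (Ici t) t) (ha : a < gammaFun f g t) :
    ∀ᶠ u in 𝓝[≥] t, a < gammaFun f g u := by
  obtain ⟨_, ⟨s, hs, rfl⟩, has⟩ := exists_lt_of_lt_csSup ((nonempty_Icc.2 ht).image _) ha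
  obtain ⟨a', haa', ha's⟩ := exists_between has
  have hgt : a' < g t := ha's.trans_le (term_le hg ⟨hs.2, le_rfl⟩)
  filter_upwards [eventually_forall_Icc_of_nhdsGE (hgc.eventually (lt_mem_nhds hgt)),
    self_mem_nhdsWithin] with u hu htu
  have hsu : s ≤ u := hs.2.trans htu
  obtain ⟨hfs, hinf⟩ := lt_min_iff.1 ha's
  have hinf_u : a' ≤ sInf (g '' Icc s u) :=
    le_sInf_image_of_le_on_diff hg (nonempty_Icc.2 hsu) hinf.le fun w hw =>
      (hu w ⟨(not_le.1 fun hwt => hw.2 ⟨hw.1.1, hwt⟩).le, hw.1.2⟩).le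
  calc a < min (f s) a' := lt_min (haa'.trans hfs) haa'
    _ ≤ term f g u s := min_le_min le_rfl hinf_u
    _ ≤ gammaFun f g u := term_le_gammaFun hg ⟨hs.1, hsu⟩

lemma eventually_gammaFun_lt_nhdsGE (hg : BddBelow (range g)) (ht : 0 ≤ t)
    (hf : UpperSemicontinuousWithinAt f (Ici t) t) (hgc : ContinuousWithinAt g (Ici t) t)
    (hb : gammaFun f g t < b) : ∀ᶠ u in 𝓝[≥] t, gammaFun f g u < b := by
  obtain ⟨b', hb', hb'b⟩ := exists_between hb
  have hmin : min (f t) (g t) < b' :=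
    (term_self (f := f) ▸ term_le_gammaFun hg ⟨ht, le_rfl⟩).trans_lt hb'
  filter_upwards [eventually_forall_Icc_of_nhdsGE
    ((hf.inf hgc.upperSemicontinuousWithinAt) b' hmin), self_mem_nhdsWithin] with u hu htu
  refine (gammaFun_le (ht.trans htu) fun s hs => ?_).trans_lt hb'b
  rcases le_total s t with hst | hts
  · exact (term_anti hg hst htu).trans ((term_le_gammaFun hg ⟨hs.1, hst⟩).trans hb'.le)
  · exact (term_le_min hg hs.2).trans (hu s ⟨hts, hs.2⟩).le

theorem continuousWithinAt_gammaFun (hg : BddBelow (range g)) (ht : 0 ≤ t)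
    (hf : UpperSemicontinuousWithinAt f (Ici t) t) (hgc : ContinuousWithinAt g (Ici t) t) :
    ContinuousWithinAt (gammaFun f g) (Ici t) t :=
  tendsto_order.2 ⟨fun _ ha => eventually_lt_gammaFun_nhdsGE hg ht hgc ha,
    fun _ hb => eventually_gammaFun_lt_nhdsGE hg ht hf hgc hb⟩

lemma bddAbove_termLeft (hg : BddBelow (range g)) (hgl : Tendsto g (𝓝[<] t) (𝓝 L)) :
    BddAbove (termLeft f g t '' Ico 0 t) := by
  refine ⟨L + 1, forall_mem_image.2 fun s hs => ?_⟩
  obtain ⟨v, hgv, hv⟩ :=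
    ((hgl.eventually (gt_mem_nhds (lt_add_one L))).and (Ioo_mem_nhdsLT hs.2)).exists
  exact (min_le_right _ _).trans
    ((sInf_image_le_of_mem (A := Ico s t) hg ⟨hv.1.le, hv.2⟩).trans hgv.le)

lemma eventually_lt_gammaFun_nhdsLT (hg : BddBelow (range g)) (ht : 0 < t)
    (ha : a < gammaLeft f g t) : ∀ᶠ v in 𝓝[<] t, a < gammaFun f g v := by
  obtain ⟨_, ⟨s, hs, rfl⟩, has⟩ := exists_lt_of_lt_csSup ((nonempty_Ico.2 ht).image _) ha
  filter_upwards [Ioo_mem_nhdsLT hs.2] with v hv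
  exact has.trans_le ((termLeft_le_term hg hv.1.le hv.2).trans
    (term_le_gammaFun hg ⟨hs.1, hv.1.le⟩))

lemma eventually_gammaFun_le_gammaLeft (hg : BddBelow (range g)) (ht : 0 < t)
    (hgl : Tendsto g (𝓝[<] t) (𝓝 L)) (hL : gammaLeft f g t < L) :
    ∀ᶠ v in 𝓝[<] t, gammaFun f g v ≤ gammaLeft f g t := by
  obtain ⟨c, hlc, hcL⟩ := exists_between hL
  filter_upwards [eventually_forall_Ioo_of_nhdsLT (hgl.eventually (lt_mem_nhds hcL)),
    Ioo_mem_nhdsLT ht] with v hv hvt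
  refine gammaFun_le hvt.1.le fun s hs => ?_
  have hst : s < t := hs.2.trans_lt hvt.2
  have hinf : min (sInf (g '' Icc s v)) c ≤ sInf (g '' Ico s t) :=
    le_sInf_image_of_le_on_diff hg (nonempty_Ico.2 hst) (min_le_left _ _) fun w hw =>
      (min_le_right _ _).trans (hv w ⟨not_le.1 fun hwv => hw.2 ⟨hw.1.1, hwv⟩, hw.1.2⟩).le
  have hmin : min (term f g v s) c ≤ gammaLeft f g t :=
    calc min (term f g v s) c = min (f s) (min (sInf (g '' Icc s v)) c) := min_assoc _ _ _
      _ ≤ termLeft f g t s := min_le_min le_rfl hinf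
      _ ≤ gammaLeft f g t := le_csSup (bddAbove_termLeft hg hgl) (mem_image_of_mem _ ⟨hs.1, hst⟩)
  exact (min_le_iff.1 hmin).resolve_right hlc.not_ge

theorem tendsto_gammaFun_nhdsLT (hg : BddBelow (range g)) (ht : 0 < t)
    (hgl : Tendsto g (𝓝[<] t) (𝓝 L)) :
    Tendsto (gammaFun f g) (𝓝[<] t) (𝓝 (gammaLeft f g t)) := by
  refine tendsto_order.2 ⟨fun _ ha => eventually_lt_gammaFun_nhdsLT hg ht ha, fun b hb => ?_⟩
  rcases lt_or_ge (gammaLeft f g t) L with hL | hL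
  · exact (eventually_gammaFun_le_gammaLeft hg ht hgl hL).mono fun _ hv => hv.trans_lt hb
  · filter_upwards [hgl.eventually (gt_mem_nhds (hL.trans_lt hb)), Ioo_mem_nhdsLT ht]
      with v hgv hv
    exact (gammaFun_le_self hg hv.1.le).trans_lt hgv

end Gamma

/-- If `μ : [0,∞) → M(ℝ)` is càdlàg (with `M(ℝ)` in the weak topology),
then `Γ(μ)` is a càdlàg real-valued function on `[0, ∞)`. -/
theorem stmt5 (μ : ℝ → FiniteMeasure ℝ)
    (hrc : ∀ t, 0 ≤ t → ContinuousWithinAt μ (Set.Ici t) t)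
    (hll : ∀ t, 0 < t →
      ∃ m : FiniteMeasure ℝ, Filter.Tendsto μ (nhdsWithin t (Set.Iio t)) (nhds m)) :
    (∀ t, 0 ≤ t → ContinuousWithinAt (GammaMap μ) (Set.Ici t) t) ∧
    (∀ t, 0 < t →
      ∃ l : ℝ, Filter.Tendsto (GammaMap μ) (nhdsWithin t (Set.Iio t)) (nhds l)) := by
  have hmass : BddBelow (range fun u => ((μ u univ : ℝ≥0) : ℝ)) :=
    ⟨0, forall_mem_range.2 fun _ => NNReal.coe_nonneg _⟩
  refine ⟨fun t ht => ?_, fun t ht => ?_⟩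
  · exact Gamma.continuousWithinAt_gammaFun hmass ht
      (upperSemicontinuousWithinAt_apply_of_isClosed (hrc t ht) isClosed_Iic)
      (NNReal.tendsto_coe.2 (hrc t ht).mass)
  · obtain ⟨m, hm⟩ := hll t ht
    exact ⟨_, Gamma.tendsto_gammaFun_nhdsLT hmass ht (NNReal.tendsto_coe.2 hm.mass)⟩
end

section
/- Let W be a random variable with density φ(w) = θ e^{-θw}/(1 - e^{-θD}) on [0, D] (θ ≠ 0, D > 0), and let V ≥ 0 be a random variable independent of W with V ≤ D almost surely and E[e^{θV}] < ∞. Then P(W > D - V) = (E[e^{θV}] - 1)/(e^{θD} - 1). -/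
/-!
By independence the joint law of `(V, W)` is the product of the marginals, so by Fubini
`P(W > D - V) = E[F(V)]` with `F(v) = P(W > D - v) = ∫_{D-v}^D φ = (e^{θv} - 1)/(e^{θD} - 1)`.
Since `F(v)` is affine in `e^{θv}`, taking expectations gives the formula.
-/

open MeasureTheory Set ProbabilityTheory Real

noncomputable def truncExpLaw (θ D : ℝ) : Measure ℝ :=
  (volume.restrict (Icc 0 D)).withDensity
    fun w => ENNReal.ofReal (θ * exp (-θ * w) / (1 - exp (-θ * D)))

theorem integral_mul_exp_neg_mul (θ a b : ℝ) :
    ∫ w in a..b, θ * exp (-θ * w) = exp (-θ * a) - exp (-θ * b) := by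
  have hderiv (w : ℝ) : HasDerivAt (fun w => -exp (-θ * w)) (θ * exp (-θ * w)) w :=
    (((hasDerivAt_id w).const_mul (-θ)).exp.neg).congr_deriv (by simp; ring)
  rw [intervalIntegral.integral_eq_sub_of_hasDerivAt (fun w _ => hderiv w)
    (by apply Continuous.intervalIntegrable; fun_prop)]
  ring

theorem div_one_sub_exp_neg_mul_nonneg (θ : ℝ) {D : ℝ} (hD : 0 ≤ D) :
    0 ≤ θ / (1 - exp (-θ * D)) := by
  rcases le_total 0 θ with h | h
  · exact div_nonneg h (sub_nonneg.2 (exp_le_one_iff.2 (by nlinarith)))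
  · exact div_nonneg_of_nonpos h (sub_nonpos.2 (one_le_exp (by nlinarith)))

theorem exp_mul_sub_one_div_nonneg (θ : ℝ) {v D : ℝ} (hv : 0 ≤ v) (hvD : v ≤ D) :
    0 ≤ (exp (θ * v) - 1) / (exp (θ * D) - 1) := by
  rcases le_total 0 θ with h | h
  · exact div_nonneg (sub_nonneg.2 (one_le_exp (by nlinarith)))
      (sub_nonneg.2 (one_le_exp (by nlinarith)))
  · exact div_nonneg_of_nonpos (sub_nonpos.2 (exp_le_one_iff.2 (by nlinarith)))
      (sub_nonpos.2 (exp_le_one_iff.2 (by nlinarith)))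

theorem truncExpLaw_Ioi_sub {θ D : ℝ} (hθ : θ ≠ 0) (hD : 0 < D) {v : ℝ} (hv : 0 ≤ v)
    (hvD : v ≤ D) :
    truncExpLaw θ D (Ioi (D - v)) = ENNReal.ofReal ((exp (θ * v) - 1) / (exp (θ * D) - 1)) := by
  have hIoc : Ioi (D - v) ∩ Icc 0 D = Ioc (D - v) D := by
    ext w
    simp only [mem_inter_iff, mem_Ioi, mem_Icc, mem_Ioc]
    constructor <;> grind
  have hφ (w : ℝ) : 0 ≤ θ * exp (-θ * w) / (1 - exp (-θ * D)) := by
    rw [mul_div_right_comm]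
    exact mul_nonneg (div_one_sub_exp_neg_mul_nonneg θ hD.le) (exp_pos _).le
  have hexp_ne_one {x : ℝ} (hx : x ≠ 0) : exp x ≠ 1 := (exp_eq_one_iff x).not.2 hx
  rw [truncExpLaw, withDensity_apply _ measurableSet_Ioi,
    Measure.restrict_restrict measurableSet_Ioi, hIoc,
    ← ofReal_integral_eq_lintegral_ofReal (Continuous.integrableOn_Ioc (by fun_prop))
      (.of_forall hφ),
    integral_div, ← intervalIntegral.integral_of_le (by linarith), integral_mul_exp_neg_mul]
  congr 1
  have hθD : exp (θ * D) * exp (-θ * D) = 1 := by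
    rw [← exp_add, neg_mul, add_neg_cancel, exp_zero]
  rw [div_eq_div_iff (sub_ne_zero.2 (hexp_ne_one (by simp [hθ, hD.ne'])).symm)
    (sub_ne_zero.2 (hexp_ne_one (by simp [hθ, hD.ne'])))]
  have hsplit : exp (-θ * (D - v)) = exp (θ * v) * exp (-θ * D) := by rw [← exp_add]; ring_nf
  rw [hsplit]
  linear_combination (exp (θ * v) - 1) * hθD

theorem ProbabilityTheory.IndepFun.measure_preimage_eq_lintegral {Ω α β : Type*}
    [MeasurableSpace Ω] [MeasurableSpace α] [MeasurableSpace β] {P : Measure Ω}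
    [IsFiniteMeasure P] {V : Ω → α} {W : Ω → β} (h : IndepFun V W P) (hV : Measurable V)
    (hW : Measurable W) {s : Set (α × β)} (hs : MeasurableSet s) :
    P ((fun ω => (V ω, W ω)) ⁻¹' s) = ∫⁻ v, P.map W (Prod.mk v ⁻¹' s) ∂P.map V := by
  rw [← Measure.prod_apply hs,
    ← (indepFun_iff_map_prod_eq_prod_map_map hV.aemeasurable hW.aemeasurable).1 h,
    Measure.map_apply (hV.prodMk hW) hs]

/-- Let `W` have the truncated exponential density
`φ(w) = θ e^{-θw}/(1 - e^{-θD})` on `[0, D]` (`θ ≠ 0`, `D > 0`), and let `V` be a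
random variable independent of `W` with `0 ≤ V ≤ D` a.s. and `E[e^{θV}] < ∞`. Then
`P(W > D - V) = (E[e^{θV}] - 1)/(e^{θD} - 1)`. -/
theorem stmt12 {Ω : Type*} [MeasurableSpace Ω] (P : Measure Ω) [IsProbabilityMeasure P]
    (θ D : ℝ) (hθ : θ ≠ 0) (hD : 0 < D)
    (W V : Ω → ℝ) (hWm : Measurable W) (hVm : Measurable V)
    (hlaw : Measure.map W P
      = (volume.restrict (Set.Icc (0 : ℝ) D)).withDensity
          (fun w => ENNReal.ofReal (θ * Real.exp (-θ * w) / (1 - Real.exp (-θ * D)))))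
    (hVrange : ∀ᵐ ω ∂P, 0 ≤ V ω ∧ V ω ≤ D)
    (hindep : ProbabilityTheory.IndepFun W V P)
    (hint : Integrable (fun ω => Real.exp (θ * V ω)) P) :
    (P {ω | D - V ω < W ω}).toReal
      = ((∫ ω, Real.exp (θ * V ω) ∂P) - 1) / (Real.exp (θ * D) - 1) := by
  have hs : MeasurableSet {p : ℝ × ℝ | D - p.1 < p.2} :=
    measurableSet_lt (by fun_prop) (by fun_prop)
  have hcond : P {ω | D - V ω < W ω}
      = ∫⁻ ω, ENNReal.ofReal ((exp (θ * V ω) - 1) / (exp (θ * D) - 1)) ∂P := by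
    rw [← lintegral_map (f := fun v => ENNReal.ofReal ((exp (θ * v) - 1) / (exp (θ * D) - 1)))
      (by fun_prop) hVm]
    refine (hindep.symm.measure_preimage_eq_lintegral hVm hWm hs).trans
      (lintegral_congr_ae ?_)
    filter_upwards [(ae_map_iff hVm.aemeasurable (measurableSet_Icc (a := 0) (b := D))).2 hVrange]
      with v hv
    rw [hlaw]
    exact truncExpLaw_Ioi_sub hθ hD hv.1 hv.2
  have hnonneg : 0 ≤ᵐ[P] fun ω => (exp (θ * V ω) - 1) / (exp (θ * D) - 1) := by
    filter_upwards [hVrange] with ω hω using exp_mul_sub_one_div_nonneg θ hω.1 hω.2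
  rw [hcond, ← integral_eq_lintegral_of_nonneg_ae hnonneg (by fun_prop), integral_div,
    integral_sub hint (integrable_const 1), integral_const]
  simp
end

section
/- Single-server reneging optimality of EDF (deterministic, pathwise): Consider finitely many customers indexed k = 1, …, n, customer k arriving at time S_k with service requirement v_k > 0 and deadline d_k > S_k, where a service policy specifies, for each time t, measurable allocation of total service rate at most 1 among customers present (a customer is present from its arrival until it is either served to completion or its deadline elapses, at which point its residual work is deleted). Let R_π(t) denote the cumulative residual work deleted due to elapsed deadlines under policy π up to time t, and let R_EDF(t) be the corresponding quantity under the preemptive Earliest-Deadline-First policy (always serve the present customer with the earliest deadline, never idle when customers are present). Then R_EDF(t) ≤ R_π(t) for every t ≥ 0 and every policy π. -/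
open MeasureTheory Set

/-- Residual work of customer `k` at time `t` under the service-rate allocation
`rate`: the initial service requirement minus the cumulative service received. -/
noncomputable def resid {n : ℕ} (v : Fin n → ℝ) (rate : ℝ → Fin n → ℝ)
    (k : Fin n) (t : ℝ) : ℝ :=
  v k - ∫ s in (0 : ℝ)..t, rate s k

/-- Customer `k` is present at time `t`: it has arrived, its deadline has not yet
elapsed, and it has strictly positive residual work. -/
def present {n : ℕ} (S v d : Fin n → ℝ) (rate : ℝ → Fin n → ℝ)
    (k : Fin n) (t : ℝ) : Prop :=
  S k ≤ t ∧ t < d k ∧ 0 < resid v rate k t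

/-- A service policy for the single-server reneging system: a measurable allocation of
total service rate at most `1` among the customers present. -/
structure Policy (n : ℕ) (S v d : Fin n → ℝ) where
  rate : ℝ → Fin n → ℝ
  meas : ∀ k, Measurable fun t => rate t k
  nonneg : ∀ t k, 0 ≤ rate t k
  total : ∀ t, (∑ k, rate t k) ≤ 1
  support : ∀ t k, rate t k ≠ 0 → present S v d rate k t

/-- Cumulative work deleted due to elapsed deadlines (reneged work) by time `t`:
the sum, over customers whose deadline has elapsed, of their residual work at the
deadline. -/
noncomputable def renegedWork {n : ℕ} (_S v d : Fin n → ℝ) (rate : ℝ → Fin n → ℝ)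
    (t : ℝ) : ℝ :=
  ∑ k, if d k ≤ t then max (resid v rate k (d k)) 0 else 0

/-- A policy is (preemptive) Earliest-Deadline-First: whenever some customer is
present, it serves, at full rate `1`, a present customer whose deadline is earliest
among all present customers (in particular it never idles when customers are
present). -/
def IsEDF {n : ℕ} (S v d : Fin n → ℝ) (π : Policy n S v d) : Prop :=
  ∀ t : ℝ, (∃ k, present S v d π.rate k t) →
    ∃ k, present S v d π.rate k t ∧ (∀ j, present S v d π.rate j t → d k ≤ d j) ∧
      π.rate t k = 1

/-!
Fix a horizon `τ` and let `C` be the customers whose deadlines are at most `τ`. Residual work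
freezes at the deadline, so the difference of reneged work at `τ` is the gap between the work
that `π` and EDF still owe to `C`. This gap starts at `0` and can only grow while it is negative:
if EDF is serving some customer of `C`, it works at full rate on `C`; otherwise every customer
of `C` with a deadline still ahead is either finished or not yet arrived under EDF, and the
customers already expired form a strictly smaller set of the same kind, which is handled by
induction on `|C|`.
-/

theorem nonneg_of_integrand_nonneg_where_neg {f g : ℝ → ℝ} {a b : ℝ} (hab : a ≤ b)
    (hg : IntervalIntegrable g volume a b)
    (hf : ∀ x ∈ Icc a b, f x = f a + ∫ y in a..x, g y) (ha : 0 ≤ f a)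
    (hneg : ∀ x ∈ Ioc a b, f x < 0 → 0 ≤ g x) : 0 ≤ f b := by
  by_contra! hb
  have hcont : ContinuousOn f (Icc a b) := by
    have := (intervalIntegral.continuousOn_primitive_interval' hg left_mem_uIcc).const_add (f a)
    rw [uIcc_of_le hab] at this
    exact this.congr hf
  set B := Icc a b ∩ f ⁻¹' Ici 0
  have hB : IsCompact B := isCompact_Icc.of_isClosed_subset
    (hcont.preimage_isClosed_of_isClosed isClosed_Icc isClosed_Ici) inter_subset_left
  obtain ⟨⟨hau, hub⟩, hu⟩ : sSup B ∈ B := hB.sSup_mem ⟨a, ⟨le_rfl, hab⟩, ha⟩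
  set u := sSup B
  have hub' : u < b := hub.lt_of_ne fun h => (h ▸ hb).not_ge hu
  have hg_nonneg : ∀ x ∈ Ioc u b, 0 ≤ g x := fun x hx => hneg x ⟨hau.trans_lt hx.1, hx.2⟩ <|
    lt_of_not_ge fun hfx => (le_csSup hB.bddAbove ⟨⟨hau.trans hx.1.le, hx.2⟩, hfx⟩).not_gt hx.1
  have hsplit : f b = f u + ∫ y in u..b, g y := by
    rw [hf b ⟨hab, le_rfl⟩, hf u ⟨hau, hub⟩, add_assoc,
      intervalIntegral.integral_add_adjacent_intervals
        (hg.mono_set (by rw [uIcc_of_le hab, uIcc_of_le hau]; exact Icc_subset_Icc le_rfl hub))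
        (hg.mono_set (by rw [uIcc_of_le hab, uIcc_of_le hub]; exact Icc_subset_Icc hau le_rfl))]
  have : 0 ≤ ∫ y in u..b, g y := by
    rw [intervalIntegral.integral_of_le hub]
    exact setIntegral_nonneg measurableSet_Ioc hg_nonneg
  linarith [show (0 : ℝ) ≤ f u from hu]

noncomputable def expiredBy {n : ℕ} (d : Fin n → ℝ) (t : ℝ) : Finset (Fin n) :=
  {k | d k ≤ t}

@[simp]
theorem mem_expiredBy {n : ℕ} {d : Fin n → ℝ} {t : ℝ} {k : Fin n} :
    k ∈ expiredBy d t ↔ d k ≤ t := by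
  simp [expiredBy]

theorem expiredBy_mono {n : ℕ} (d : Fin n → ℝ) {s t : ℝ} (hst : s ≤ t) :
    expiredBy d s ⊆ expiredBy d t :=
  fun _ hk => (mem_expiredBy.1 hk).trans hst |> mem_expiredBy.2

namespace Policy

variable {n : ℕ} {S v d : Fin n → ℝ} (p : Policy n S v d)

theorem sum_rate_le_one (C : Finset (Fin n)) (t : ℝ) : ∑ k ∈ C, p.rate t k ≤ 1 :=
  (Finset.sum_le_sum_of_subset_of_nonneg C.subset_univ fun k _ _ => p.nonneg t k).trans
    (p.total t)

theorem intervalIntegrable_rate (k : Fin n) (a b : ℝ) :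
    IntervalIntegrable (fun s => p.rate s k) volume a b := by
  refine (intervalIntegrable_const (c := (1 : ℝ))).mono_fun
    (p.meas k).aestronglyMeasurable.restrict (Filter.Eventually.of_forall fun s => ?_)
  simpa [abs_of_nonneg (p.nonneg s k)] using p.sum_rate_le_one {k} s

theorem rate_eq_zero_of_not_present {t : ℝ} {k : Fin n} (h : ¬present S v d p.rate k t) :
    p.rate t k = 0 :=
  not_imp_comm.1 (p.support t k) h

theorem resid_eq_sub_integral (k : Fin n) (a b : ℝ) :
    resid v p.rate k b = resid v p.rate k a - ∫ s in a..b, p.rate s k := by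
  rw [resid, resid, ← intervalIntegral.integral_add_adjacent_intervals
    (p.intervalIntegrable_rate k 0 a) (p.intervalIntegrable_rate k a b)]
  ring

theorem resid_zero (k : Fin n) : resid v p.rate k 0 = v k := by
  simp [resid]

theorem resid_eq_of_rate_eq_zero (k : Fin n) {a b : ℝ} (hab : a ≤ b)
    (h : ∀ s ∈ Ioc a b, p.rate s k = 0) : resid v p.rate k b = resid v p.rate k a := by
  rw [p.resid_eq_sub_integral k a, intervalIntegral.integral_of_le hab,
    setIntegral_congr_fun measurableSet_Ioc h]
  simp

theorem rate_eq_zero_of_deadline_le {t : ℝ} {k : Fin n} (h : d k ≤ t) : p.rate t k = 0 :=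
  p.rate_eq_zero_of_not_present fun hp => hp.2.1.not_ge h

theorem resid_eq_resid_deadline {k : Fin n} {t : ℝ} (h : d k ≤ t) :
    resid v p.rate k t = resid v p.rate k (d k) :=
  p.resid_eq_of_rate_eq_zero k h fun _ hs => p.rate_eq_zero_of_deadline_le hs.1.le

theorem resid_eq_of_lt_arrival {k : Fin n} {t : ℝ} (h0 : 0 ≤ t) (h : t < S k) :
    resid v p.rate k t = v k := by
  rw [p.resid_eq_of_rate_eq_zero k h0 fun _ hs =>
    p.rate_eq_zero_of_not_present fun hp => hp.1.not_gt (hs.2.trans_lt h), p.resid_zero]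

theorem resid_nonneg (hv : ∀ k, 0 ≤ v k) (k : Fin n) (t : ℝ) : 0 ≤ resid v p.rate k t := by
  set a := min t 0
  refine nonneg_of_integrand_nonneg_where_neg (g := fun s => -p.rate s k) (min_le_left t 0)
    (p.intervalIntegrable_rate k a t).neg (fun x _ => ?_) ?_ fun x _ hx => ?_
  · rw [intervalIntegral.integral_neg, ← sub_eq_add_neg, p.resid_eq_sub_integral k a]
  · rw [p.resid_eq_sub_integral k 0, p.resid_zero, intervalIntegral.integral_symm, sub_neg_eq_add]
    exact add_nonneg (hv k) <| intervalIntegral.integral_nonneg (min_le_right t 0)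
      fun s _ => p.nonneg s k
  · simp [p.rate_eq_zero_of_not_present fun hp : present S v d p.rate k x => hx.not_gt hp.2.2]

theorem renegedWork_eq_sum_resid (hv : ∀ k, 0 ≤ v k) (t : ℝ) :
    renegedWork S v d p.rate t = ∑ k ∈ expiredBy d t, resid v p.rate k t := by
  rw [renegedWork, expiredBy, Finset.sum_filter]
  refine Finset.sum_congr rfl fun k _ => ?_
  split_ifs with h
  · rw [max_eq_left (p.resid_nonneg hv k _), p.resid_eq_resid_deadline h]
  · rfl

end Policy

section EDF

variable {n : ℕ} {S v d : Fin n → ℝ}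

theorem IsEDF.exists_rate_eq_one {edf : Policy n S v d} (hedf : IsEDF S v d edf) {k : Fin n}
    {t : ℝ} (hk : present S v d edf.rate k t) : ∃ j, d j ≤ d k ∧ edf.rate t j = 1 := by
  obtain ⟨j, -, hj, hrate⟩ := hedf t ⟨k, hk⟩
  exact ⟨j, hj k hk, hrate⟩

theorem IsEDF.sum_rate_le_of_present {edf : Policy n S v d} (hedf : IsEDF S v d edf)
    (π : Policy n S v d) {τ t : ℝ} {k : Fin n} (hk : k ∈ expiredBy d τ)
    (hkp : present S v d edf.rate k t) :
    ∑ k ∈ expiredBy d τ, π.rate t k ≤ ∑ k ∈ expiredBy d τ, edf.rate t k := by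
  obtain ⟨j, hjk, hj⟩ := hedf.exists_rate_eq_one hkp
  calc ∑ k ∈ expiredBy d τ, π.rate t k ≤ 1 := π.sum_rate_le_one _ t
    _ = edf.rate t j := hj.symm
    _ ≤ ∑ k ∈ expiredBy d τ, edf.rate t k :=
      Finset.single_le_sum (fun k _ => edf.nonneg t k)
        (mem_expiredBy.2 (hjk.trans (mem_expiredBy.1 hk)))

theorem resid_le_of_not_present (hv : ∀ k, 0 ≤ v k) (p q : Policy n S v d) {k : Fin n} {t : ℝ}
    (ht : 0 ≤ t) (hdk : t < d k) (hk : ¬present S v d p.rate k t) :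
    resid v p.rate k t ≤ resid v q.rate k t := by
  rcases lt_or_ge t (S k) with hS | hS
  · rw [p.resid_eq_of_lt_arrival ht hS, q.resid_eq_of_lt_arrival ht hS]
  · exact (not_lt.1 fun h => hk ⟨hS, hdk, h⟩).trans (q.resid_nonneg hv k t)

theorem sum_resid_sub_eq_integral (p q : Policy n S v d) (C : Finset (Fin n)) (a b : ℝ) :
    ∑ k ∈ C, (resid v q.rate k b - resid v p.rate k b) =
      ∑ k ∈ C, (resid v q.rate k a - resid v p.rate k a) +
        ∫ s in a..b, ∑ k ∈ C, (p.rate s k - q.rate s k) := by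
  rw [intervalIntegral.integral_finsetSum fun k _ =>
    (p.intervalIntegrable_rate k a b).sub (q.intervalIntegrable_rate k a b),
    ← Finset.sum_add_distrib]
  refine Finset.sum_congr rfl fun k _ => ?_
  rw [intervalIntegral.integral_sub (p.intervalIntegrable_rate k a b)
    (q.intervalIntegrable_rate k a b), p.resid_eq_sub_integral k a, q.resid_eq_sub_integral k a]
  ring

theorem IsEDF.sum_resid_le (hv : ∀ k, 0 ≤ v k) {edf : Policy n S v d} (hedf : IsEDF S v d edf)
    (π : Policy n S v d) {τ t : ℝ} (ht : 0 ≤ t) (htτ : t ≤ τ) :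
    ∑ k ∈ expiredBy d τ, resid v edf.rate k t ≤ ∑ k ∈ expiredBy d τ, resid v π.rate k t := by
  induction hm : (expiredBy d τ).card using Nat.strong_induction_on generalizing τ t with
  | _ m ih =>
  rw [← sub_nonneg, ← Finset.sum_sub_distrib]
  refine nonneg_of_integrand_nonneg_where_neg ht
    (by simpa only [Finset.sum_fn] using IntervalIntegrable.sum (expiredBy d τ) fun k _ =>
      (edf.intervalIntegrable_rate k 0 t).sub (π.intervalIntegrable_rate k 0 t))
    (fun x _ => sum_resid_sub_eq_integral edf π _ 0 x) (by simp [Policy.resid_zero]) ?_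
  intro r ⟨hr0, hrt⟩ hneg
  have hsub : expiredBy d r ⊆ expiredBy d τ := expiredBy_mono d (hrt.trans htτ)
  rw [Finset.sum_sub_distrib, sub_nonneg]
  by_cases hall : expiredBy d τ ⊆ expiredBy d r
  · have hzero : ∀ k ∈ expiredBy d τ, π.rate r k = 0 := fun k hk =>
      π.rate_eq_zero_of_deadline_le (mem_expiredBy.1 (hall hk))
    rw [Finset.sum_eq_zero hzero]
    exact Finset.sum_nonneg fun k _ => edf.nonneg r k
  by_cases hserved : ∃ k ∈ expiredBy d τ, present S v d edf.rate k r
  · obtain ⟨k, hk, hkp⟩ := hserved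
    exact hedf.sum_rate_le_of_present π hk hkp
  push Not at hserved
  refine absurd ?_ hneg.not_ge
  rw [← Finset.sum_sdiff hsub]
  refine add_nonneg (Finset.sum_nonneg fun k hk => ?_) ?_
  · obtain ⟨hkτ, hkr⟩ := Finset.mem_sdiff.1 hk
    exact sub_nonneg.2 (resid_le_of_not_present hv edf π hr0.le
      (not_le.1 (mt mem_expiredBy.2 hkr)) (hserved k hkτ))
  · rw [Finset.sum_sub_distrib, sub_nonneg]
    exact ih _ (hm ▸ Finset.card_lt_card ⟨hsub, hall⟩) hr0.le le_rfl rfl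

theorem IsEDF.renegedWork_le (hv : ∀ k, 0 ≤ v k) {edf : Policy n S v d} (hedf : IsEDF S v d edf)
    (π : Policy n S v d) {t : ℝ} (ht : 0 ≤ t) :
    renegedWork S v d edf.rate t ≤ renegedWork S v d π.rate t := by
  rw [edf.renegedWork_eq_sum_resid hv, π.renegedWork_eq_sum_resid hv]
  exact hedf.sum_resid_le hv π ht le_rfl

end EDF

theorem stmt14_general {n : ℕ} (S v d : Fin n → ℝ)
    (hv : ∀ k, 0 < v k)
    (edf : Policy n S v d) (hedf : IsEDF S v d edf)
    (π : Policy n S v d) :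
    ∀ t : ℝ, 0 ≤ t → renegedWork S v d edf.rate t ≤ renegedWork S v d π.rate t :=
  fun _ ht => hedf.renegedWork_le (fun k => (hv k).le) π ht

/-- Pathwise optimality of EDF for the single-server queue with
reneging: for finitely many customers with arrival times `S`, service requirements
`v > 0` and deadlines `d > S`, any EDF policy accumulates no more reneged work than
any other policy, at every time `t ≥ 0`. -/
theorem stmt14 {n : ℕ} (S v d : Fin n → ℝ)
    (hv : ∀ k, 0 < v k) (hd : ∀ k, S k < d k)
    (edf : Policy n S v d) (hedf : IsEDF S v d edf)
    (π : Policy n S v d) :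
    ∀ t : ℝ, 0 ≤ t → renegedWork S v d edf.rate t ≤ renegedWork S v d π.rate t :=
  stmt14_general S v d hv edf hedf π
end
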